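/- arXiv:1407.0204 — 10 statements merged into one kernel-verified Lean document; each statement's English description precedes it below -/
import Mathlib

section
/- Let A be an OA(2s^t, m, s, t) with a repeated run c, and let n_i be the number of rows other than one fixed copy of c that agree with c in exactly i coordinates. Then n_t = n_{t+1} = ... = n_{m-1} = 0 and n_m = 1 (using the Bose–Bush coincidence identities ∑_{i=j}^m C(i,j) n_i = C(m,j)(2s^{t-j} − 1) for 0 ≤ j ≤ t). -/
open Finset

/-- `A` is an orthogonal array OA(n, m, s, t): an array with row-index type `R` of
cardinality `n`, `m` columns, entries in `{0,...,s-1}`, such that in every choice of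
`t` distinct columns every `t`-tuple of levels appears exactly `n / s^t` times. -/
def isOA {R : Type} [Fintype R] (n : ℕ) {m : ℕ} (s t : ℕ) (A : R → Fin m → Fin s) : Prop :=
  Fintype.card R = n ∧
  ∀ cols : Fin t → Fin m, Function.Injective cols →
    ∀ vals : Fin t → Fin s,
      (Finset.univ.filter (fun r => ∀ k, A r (cols k) = vals k)).card * s ^ t = n

/-- The child array of `A` obtained by branching column `j` at level `ℓ`:
restrict to the rows with entry `ℓ` in column `j` and delete column `j`. -/
def child {n m s : ℕ} (A : Fin n → Fin (m + 1) → Fin s) (j : Fin (m + 1)) (ℓ : Fin s) :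
    {r : Fin n // A r j = ℓ} → Fin m → Fin s :=
  fun r k => A r.1 (j.succAbove k)

/-- `B` is embeddable: it can be extended by one column to an OA(n, m+1, s, t). -/
def isEmbeddable {R : Type} [Fintype R] (n : ℕ) {m : ℕ} (s t : ℕ) (B : R → Fin m → Fin s) : Prop :=
  ∃ e : R → Fin s, isOA n s t (fun r => Fin.snoc (B r) (e r))

/-- Number of coincidences (agreeing coordinates) between rows `r` and `c` of `A`. -/
def coinc {n m s : ℕ} (A : Fin n → Fin m → Fin s) (r c : Fin n) : ℕ :=
  (Finset.univ.filter (fun j => A r j = A c j)).card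

/-- `nCoinc A c i` is the number of rows of `A` other than row `c` that agree with
row `c` in exactly `i` coordinates. -/
def nCoinc {n m s : ℕ} (A : Fin n → Fin m → Fin s) (c : Fin n) (i : ℕ) : ℕ :=
  (Finset.univ.filter (fun r => r ≠ c ∧ coinc A r c = i)).card

/-- Three `ℕ`-valued columns of length `n` form an OA(n, 3, s, 3). -/
def isOA3N (n s : ℕ) (x y z : Fin n → ℕ) : Prop :=
  ∀ v1 v2 v3 : ℕ, v1 < s → v2 < s → v3 < s →
    (Finset.univ.filter (fun r => x r = v1 ∧ y r = v2 ∧ z r = v3)).card * s ^ 3 = n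

/-- Generalized orthogonal array GOA(n, m, s, 3), with column groups `(a i, b i, c i)`. -/
def isGOA3 (n m s : ℕ) (a b c : Fin m → Fin n → ℕ) : Prop :=
  (∀ i r, a i r < s ∧ b i r < s ∧ c i r < s) ∧
  (∀ i j k : Fin m, i < j → j < k → isOA3N n s (a i) (a j) (a k)) ∧
  (∀ i j : Fin m, i ≠ j → isOA3N n s (a i) (b i) (a j)) ∧
  (∀ i : Fin m, isOA3N n s (a i) (b i) (c i))

/-- Strong orthogonal array SOA(n, m, s^3, 3): entries in `{0,...,s^3-1}`, and for every
`g ∈ {1,2,3}`, every choice of `g` distinct columns and positive `u 0 + ⋯ + u (g-1) = 3`,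
collapsing the `k`-th chosen column via `a ↦ a / s^(3 - u k)` yields a mixed-level
orthogonal array of strength `g` (every collapsed level combination appears `n / s^3` times). -/
def isSOA3 (n m s : ℕ) (D : Fin n → Fin m → ℕ) : Prop :=
  (∀ r i, D r i < s ^ 3) ∧
  ∀ g : ℕ, 1 ≤ g → g ≤ 3 →
    ∀ cols : Fin g → Fin m, Function.Injective cols →
      ∀ u : Fin g → ℕ, (∀ k, 1 ≤ u k) → (∑ k, u k) = 3 →
        ∀ vals : Fin g → ℕ, (∀ k, vals k < s ^ u k) →
          (Finset.univ.filter (fun r => ∀ k, D r (cols k) / s ^ (3 - u k) = vals k)).card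
            * s ^ 3 = n

/-- `ℕ`-valued orthogonal array OA(n, m, s, t). -/
def isOAN (n m s t : ℕ) (A : Fin n → Fin m → ℕ) : Prop :=
  (∀ r j, A r j < s) ∧
  ∀ cols : Fin t → Fin m, Function.Injective cols →
    ∀ vals : Fin t → ℕ, (∀ k, vals k < s) →
      (Finset.univ.filter (fun r => ∀ k, A r (cols k) = vals k)).card * s ^ t = n

/-- For an OA(2s^t, m, s, t) with a repeated run `c` (one fixed copy is the
row `r₀`), the coincidence numbers satisfy `n_t = ⋯ = n_{m-1} = 0` and `n_m = 1`. -/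
theorem coincidence_tail (s t m : ℕ) (htm : t ≤ m)
    (A : Fin (2 * s ^ t) → Fin m → Fin s) (hOA : isOA (2 * s ^ t) s t A)
    (r₀ r₁ : Fin (2 * s ^ t)) (hne : r₀ ≠ r₁) (hrep : A r₀ = A r₁) :
    (∀ i, t ≤ i → i < m → nCoinc A r₀ i = 0) ∧ nCoinc A r₀ m = 1 := by
  classical
  have hst : 0 < s ^ t := by
    rcases Nat.eq_zero_or_pos t with ht | ht
    · simp [ht]
    · have hm : 0 < m := lt_of_lt_of_le ht htm
      exact pow_pos (A r₀ ⟨0, hm⟩).pos t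
  set ag : Fin (2 * s ^ t) → Finset (Fin m) :=
    fun r => univ.filter (fun j => A r j = A r₀ j) with hag
  have hcoinc : ∀ r, coinc A r r₀ = (ag r).card := fun r => rfl
  set T : Finset (Fin (2 * s ^ t)) := univ.filter (fun r => r ≠ r₀) with hT
  -- key: for every t-subset S of columns, exactly 2 rows agree with r₀ on S
  have key : ∀ S : Finset (Fin m), S.card = t →
      (univ.filter (fun r => S ⊆ ag r)).card = 2 := by
    intro S hS
    have e := S.orderIsoOfFin hS
    have hinj : Function.Injective (fun k => (e k : Fin m)) := by
      intro a b h
      exact e.injective (Subtype.ext h)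
    have h := hOA.2 (fun k => (e k : Fin m)) hinj (fun k => A r₀ (e k))
    have hset : univ.filter (fun r => ∀ k, A r (e k : Fin m) = A r₀ (e k : Fin m)) =
        univ.filter (fun r => S ⊆ ag r) := by
      ext r
      simp only [mem_filter, mem_univ, true_and, Finset.subset_iff, hag, mem_filter]
      constructor
      · intro h j hj
        have := h (e.symm ⟨j, hj⟩)
        simpa using this
      · intro h k
        have := h (e k).2
        simpa using this
    rw [hset] at h
    exact Nat.eq_of_mul_eq_mul_right hst h
  have keyT : ∀ S : Finset (Fin m), S.card = t →
      (T.filter (fun r => S ⊆ ag r)).card = 1 := by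
    intro S hS
    have h0 : S ⊆ ag r₀ := by
      intro j hj; simp [hag]
    have hset : T.filter (fun r => S ⊆ ag r) =
        (univ.filter (fun r => S ⊆ ag r)).erase r₀ := by
      ext r
      simp only [hT, filter_filter, mem_filter, mem_univ, true_and, mem_erase]
    rw [hset, card_erase_of_mem (by simp [h0]), key S hS]
  -- double counting
  have count : ∑ r ∈ T, (coinc A r r₀).choose t = Nat.choose m t := by
    calc ∑ r ∈ T, (coinc A r r₀).choose t
        = ∑ r ∈ T, ((powersetCard t (univ : Finset (Fin m))).filter
            (fun S => S ⊆ ag r)).card := by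
          refine sum_congr rfl fun r _ => ?_
          rw [hcoinc, ← Finset.card_powersetCard]
          congr 1
          ext S
          simp only [mem_powersetCard, mem_filter]
          constructor
          · intro h
            exact ⟨⟨h.1.trans (subset_univ _), h.2⟩, h.1⟩
          · intro h
            exact ⟨h.2, h.1.2⟩
      _ = ∑ r ∈ T, ∑ S ∈ powersetCard t (univ : Finset (Fin m)),
            if S ⊆ ag r then 1 else 0 := by
          refine sum_congr rfl fun r _ => ?_
          rw [Finset.card_filter]
      _ = ∑ S ∈ powersetCard t (univ : Finset (Fin m)), ∑ r ∈ T,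
            if S ⊆ ag r then 1 else 0 := Finset.sum_comm
      _ = ∑ S ∈ powersetCard t (univ : Finset (Fin m)),
            (T.filter (fun r => S ⊆ ag r)).card := by
          refine sum_congr rfl fun S _ => ?_
          rw [Finset.card_filter]
      _ = ∑ S ∈ powersetCard t (univ : Finset (Fin m)), 1 := by
          refine sum_congr rfl fun S hS => ?_
          exact keyT S (mem_powersetCard.1 hS).2
      _ = Nat.choose m t := by
          rw [Finset.sum_const, Finset.card_powersetCard, card_univ, Fintype.card_fin,
            smul_eq_mul, mul_one]
  have hr₁T : r₁ ∈ T := by simp [hT, hne.symm]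
  have hagr₁ : ag r₁ = univ := by
    ext j
    simp [hag, (congrFun hrep j).symm]
  have hcr₁ : coinc A r₁ r₀ = m := by
    rw [hcoinc, hagr₁, card_univ, Fintype.card_fin]
  have hsplit := Finset.add_sum_erase T (fun r => (coinc A r r₀).choose t) hr₁T
  simp only [hcr₁] at hsplit
  rw [count] at hsplit
  have hzero : ∀ r ∈ T.erase r₁, (coinc A r r₀).choose t = 0 := by
    refine Finset.sum_eq_zero_iff.1 ?_
    omega
  have hlt : ∀ r, r ≠ r₀ → r ≠ r₁ → coinc A r r₀ < t := by
    intro r h0 h1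
    have hmem : r ∈ T.erase r₁ := mem_erase.2 ⟨h1, by simp [hT, h0]⟩
    exact Nat.choose_eq_zero_iff.1 (hzero r hmem)
  constructor
  · intro i hti him
    rw [nCoinc, Finset.card_eq_zero]
    refine Finset.filter_eq_empty_iff.2 ?_
    rintro r _ ⟨h0, hci⟩
    by_cases h1 : r = r₁
    · subst h1; rw [hcr₁] at hci; omega
    · have := hlt r h0 h1; omega
  · rw [nCoinc]
    have hsing : univ.filter (fun r => r ≠ r₀ ∧ coinc A r r₀ = m) = {r₁} := by
      ext r
      simp only [mem_filter, mem_univ, true_and, mem_singleton]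
      constructor
      · rintro ⟨h0, hc⟩
        by_contra h1
        have := hlt r h0 h1
        omega
      · rintro rfl
        exact ⟨hne.symm, hcr₁⟩
    rw [hsing, card_singleton]
end

section
/- Let A be an OA(2s^t, m, s, t) with a repeated run c, where the coincidence numbers satisfy n_t = ⋯ = n_{m-1} = 0 and n_m = 1. Then solving the Bose–Bush identities for j = t-1 and j = t-2 yields n_{t-1} = 2(s-1)·C(m, t-1) and n_{t-2} = 2(s-1)(s+t-1-m)·C(m, t-2). -/
open Finset

/-- Strength-`j` property of an array. -/
def OAstrength (n : ℕ) {m : ℕ} (s : ℕ) {nn : ℕ} (A : Fin nn → Fin m → Fin s) (j : ℕ) : Prop :=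
  ∀ cols : Fin j → Fin m, Function.Injective cols →
    ∀ vals : Fin j → Fin s,
      (Finset.univ.filter (fun r => ∀ k, A r (cols k) = vals k)).card * s ^ j = n

lemma OAstrength_step {n m s j nn : ℕ} (hs : 0 < s) (hjm : j < m)
    {A : Fin nn → Fin m → Fin s} (h : OAstrength n s A (j + 1)) :
    OAstrength n s A j := by
  intro cols hc vals
  have hcard : (Finset.image cols Finset.univ).card = j := by
    rw [Finset.card_image_of_injective _ hc]; simp
  have hcompl : ((Finset.image cols Finset.univ)ᶜ).Nonempty := by
    rw [← Finset.card_pos, Finset.card_compl, hcard]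
    simp only [card_univ, Fintype.card_fin]; omega
  obtain ⟨j0, hj0⟩ := hcompl
  rw [Finset.mem_compl] at hj0
  have hj0' : j0 ∉ Set.range cols := by
    rintro ⟨k, rfl⟩; exact hj0 (Finset.mem_image_of_mem _ (Finset.mem_univ _))
  have hc' : Function.Injective (Fin.cons j0 cols : Fin (j + 1) → Fin m) :=
    Fin.cons_injective_iff.mpr ⟨hj0', hc⟩
  have key : ∀ v : Fin s,
      (Finset.univ.filter (fun r =>
        ∀ k : Fin (j + 1), A r ((Fin.cons j0 cols : Fin (j + 1) → Fin m) k)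
          = (Fin.cons v vals : Fin (j + 1) → Fin s) k)).card * s ^ (j + 1)
        = n := by
    intro v
    exact h (Fin.cons j0 cols) hc' (Fin.cons v vals)
  have hsum : (Finset.univ.filter (fun r => ∀ k, A r (cols k) = vals k)).card
      = ∑ v : Fin s, (Finset.univ.filter (fun r =>
          ∀ k : Fin (j + 1), A r ((Fin.cons j0 cols : Fin (j + 1) → Fin m) k)
            = (Fin.cons v vals : Fin (j + 1) → Fin s) k)).card := by
    rw [Finset.card_eq_sum_card_fiberwise (f := fun r => A r j0)
      (t := (Finset.univ : Finset (Fin s))) (fun x _ => Finset.mem_univ _)]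
    refine Finset.sum_congr rfl fun v _ => ?_
    rw [Finset.filter_filter]
    refine congrArg _ (Finset.filter_congr fun r _ => ?_)
    rw [Fin.forall_fin_succ]
    simp only [Fin.cons_zero, Fin.cons_succ]
    tauto
  have hmul : (Finset.univ.filter (fun r => ∀ k, A r (cols k) = vals k)).card
      * s ^ (j + 1) = n * s := by
    rw [hsum, Finset.sum_mul]
    simp only [key]
    rw [Finset.sum_const, card_univ, Fintype.card_fin, smul_eq_mul, mul_comm]
  have : (Finset.univ.filter (fun r => ∀ k, A r (cols k) = vals k)).card
      * s ^ j * s = n * s := by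
    rw [mul_assoc, ← pow_succ]; exact hmul
  exact Nat.eq_of_mul_eq_mul_right hs this

lemma OAstrength_down {n m s nn : ℕ} (hs : 0 < s) {A : Fin nn → Fin m → Fin s} :
    ∀ d j, j + d ≤ m → OAstrength n s A (j + d) → OAstrength n s A j := by
  intro d
  induction d with
  | zero => intro j _ h; simpa using h
  | succ d ih =>
      intro j hjm h
      have h' : OAstrength n s A ((j + 1) + d) := by
        rwa [show (j + 1) + d = j + (d + 1) by omega]
      exact OAstrength_step hs (by omega) (by simpa using ih (j + 1) (by omega) h')

lemma coinc_self {nn m s : ℕ} (A : Fin nn → Fin m → Fin s) (r₀ : Fin nn) :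
    coinc A r₀ r₀ = m := by
  simp [coinc]

lemma coinc_le {nn m s : ℕ} (A : Fin nn → Fin m → Fin s) (r r₀ : Fin nn) :
    coinc A r r₀ ≤ m := by
  refine (Finset.card_filter_le _ _).trans ?_
  simp

/-- Bose–Bush identity: double counting pairs (row, j-subset of agreeing columns). -/
lemma bose_bush {nn m s t : ℕ} (hs : 0 < s) {A : Fin nn → Fin m → Fin s}
    (j : ℕ) (hj : j ≤ t) (hst : OAstrength (2 * s ^ t) s A j) (r₀ : Fin nn) :
    ∑ r : Fin nn, (coinc A r r₀).choose j = m.choose j * (2 * s ^ (t - j)) := by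
  have key : ∀ S ∈ Finset.univ.powersetCard j,
      (Finset.univ.filter (fun r : Fin nn =>
        S ⊆ Finset.univ.filter (fun c => A r c = A r₀ c))).card = 2 * s ^ (t - j) := by
    intro S hS
    rw [Finset.mem_powersetCard] at hS
    obtain ⟨-, hScard⟩ := hS
    set cols : Fin j → Fin m := fun k => ((S.orderIsoOfFin hScard k : S) : Fin m) with hcols
    have hinj : Function.Injective cols := fun a b hab =>
      (S.orderIsoOfFin hScard).injective (Subtype.ext hab)
    have hiff : ∀ r : Fin nn,
        (S ⊆ Finset.univ.filter (fun c => A r c = A r₀ c)) ↔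
        (∀ k, A r (cols k) = A r₀ (cols k)) := by
      intro r
      constructor
      · intro h k
        have hmem : cols k ∈ S := (S.orderIsoOfFin hScard k).2
        have := h hmem
        simpa using this
      · intro h c hc
        obtain ⟨k, hk⟩ := (S.orderIsoOfFin hScard).surjective ⟨c, hc⟩
        have hck : cols k = c := by rw [hcols]; simp [hk]
        rw [Finset.mem_filter]
        exact ⟨Finset.mem_univ _, by rw [← hck]; exact h k⟩
    have hcount := hst cols hinj (fun k => A r₀ (cols k))
    have heq : (Finset.univ.filter (fun r : Fin nn =>
        S ⊆ Finset.univ.filter (fun c => A r c = A r₀ c)))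
        = (Finset.univ.filter (fun r => ∀ k, A r (cols k) = A r₀ (cols k))) :=
      Finset.filter_congr (fun r _ => hiff r)
    rw [heq]
    have hpow : 2 * s ^ t = (2 * s ^ (t - j)) * s ^ j := by
      rw [mul_assoc, ← pow_add, Nat.sub_add_cancel hj]
    rw [hpow] at hcount
    exact Nat.eq_of_mul_eq_mul_right (pow_pos hs j) hcount
  calc ∑ r : Fin nn, (coinc A r r₀).choose j
      = ∑ r : Fin nn, ((Finset.univ.powersetCard j).filter
          (fun S => S ⊆ Finset.univ.filter (fun c => A r c = A r₀ c))).card := by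
        refine Finset.sum_congr rfl fun r _ => ?_
        rw [coinc, ← Finset.card_powersetCard]
        congr 1
        ext S
        simp only [Finset.mem_powersetCard, Finset.mem_filter]
        exact ⟨fun ⟨h1, h2⟩ => ⟨⟨Finset.subset_univ S, h2⟩, h1⟩,
          fun ⟨⟨_, h2⟩, h1⟩ => ⟨h1, h2⟩⟩
    _ = ∑ S ∈ Finset.univ.powersetCard j, (Finset.univ.filter (fun r : Fin nn =>
          S ⊆ Finset.univ.filter (fun c => A r c = A r₀ c))).card := by
        simp_rw [Finset.card_filter]
        exact Finset.sum_comm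
    _ = ∑ S ∈ Finset.univ.powersetCard j, 2 * s ^ (t - j) :=
        Finset.sum_congr rfl key
    _ = m.choose j * (2 * s ^ (t - j)) := by
        rw [Finset.sum_const, Finset.card_powersetCard, card_univ, Fintype.card_fin,
          smul_eq_mul]

lemma coinc_fiber_sum {nn m s : ℕ} (A : Fin nn → Fin m → Fin s) (r₀ : Fin nn) (f : ℕ → ℕ) :
    ∑ r : Fin nn, f (coinc A r r₀)
      = ∑ i ∈ Finset.range (m + 1),
          (Finset.univ.filter (fun r => coinc A r r₀ = i)).card * f i := by
  rw [← Finset.sum_fiberwise_of_maps_to (g := fun r => coinc A r r₀)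
    (t := Finset.range (m + 1))
    (fun r _ => Finset.mem_range.mpr (Nat.lt_succ_of_le (coinc_le A r r₀)))
    (fun r => f (coinc A r r₀))]
  refine Finset.sum_congr rfl fun i _ => ?_
  rw [Finset.sum_congr rfl (fun r hr => by rw [(Finset.mem_filter.mp hr).2]),
    Finset.sum_const, smul_eq_mul, mul_comm]

lemma card_coinc_eq_nCoinc {nn m s : ℕ} (A : Fin nn → Fin m → Fin s) (r₀ : Fin nn)
    (i : ℕ) (him : i ≠ m) :
    (Finset.univ.filter (fun r => coinc A r r₀ = i)).card = nCoinc A r₀ i := by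
  rw [nCoinc]
  congr 1
  refine Finset.filter_congr fun r _ => ?_
  constructor
  · intro h
    refine ⟨?_, h⟩
    rintro rfl
    rw [coinc_self] at h
    exact him h.symm
  · exact fun h => h.2

lemma card_coinc_top {nn m s : ℕ} (A : Fin nn → Fin m → Fin s) (r₀ : Fin nn) :
    (Finset.univ.filter (fun r => coinc A r r₀ = m)).card = nCoinc A r₀ m + 1 := by
  have hset : Finset.univ.filter (fun r => coinc A r r₀ = m)
      = insert r₀ (Finset.univ.filter (fun r => r ≠ r₀ ∧ coinc A r r₀ = m)) := by
    ext r
    simp only [Finset.mem_filter, Finset.mem_univ, true_and, Finset.mem_insert]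
    constructor
    · intro h
      by_cases hr : r = r₀
      · exact Or.inl hr
      · exact Or.inr ⟨hr, h⟩
    · rintro (rfl | ⟨-, h⟩)
      · exact coinc_self _ _
      · exact h
  rw [hset, Finset.card_insert_of_notMem (by simp), nCoinc]

/-- For an OA(2s^t, m, s, t) with a repeated run whose coincidence numbers
satisfy `n_t = ⋯ = n_{m-1} = 0`, `n_m = 1`, solving the Bose–Bush identities for
`j = t-1` and `j = t-2` yields `n_{t-1} = 2(s-1) C(m,t-1)` and
`n_{t-2} = 2(s-1)(s+t-1-m) C(m,t-2)`. -/
theorem coincidence_solve (s t m : ℕ) (ht : 2 ≤ t) (htm : t ≤ m)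
    (A : Fin (2 * s ^ t) → Fin m → Fin s) (hOA : isOA (2 * s ^ t) s t A)
    (r₀ r₁ : Fin (2 * s ^ t)) (hne : r₀ ≠ r₁) (hrep : A r₀ = A r₁)
    (hmid : ∀ i, t ≤ i → i < m → nCoinc A r₀ i = 0) (htop : nCoinc A r₀ m = 1) :
    nCoinc A r₀ (t - 1) = 2 * (s - 1) * Nat.choose m (t - 1) ∧
    nCoinc A r₀ (t - 2) = 2 * (s - 1) * (s + t - 1 - m) * Nat.choose m (t - 2) := by
  obtain ⟨k, rfl⟩ : ∃ k, t = k + 2 := ⟨t - 2, by omega⟩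
  have hnnpos : 0 < 2 * s ^ (k + 2) := Fin.pos r₀
  have hs : 0 < s := by
    rcases Nat.eq_zero_or_pos s with rfl | h
    · simp [pow_succ] at hnnpos
    · exact h
  obtain ⟨u, rfl⟩ : ∃ u, s = u + 1 := ⟨s - 1, by omega⟩
  have hstr_t : OAstrength (2 * (u + 1) ^ (k + 2)) (u + 1) A (k + 2) := hOA.2
  have hstr : ∀ j, j ≤ k + 2 → OAstrength (2 * (u + 1) ^ (k + 2)) (u + 1) A j := by
    intro j hj
    refine OAstrength_down hs (k + 2 - j) j (by omega) ?_
    rwa [show j + (k + 2 - j) = k + 2 by omega]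
  -- total sums via Bose–Bush
  have hBB : ∀ j, j ≤ k + 2 →
      ∑ r, (coinc A r r₀).choose j = m.choose j * (2 * (u + 1) ^ (k + 2 - j)) :=
    fun j hj => bose_bush hs j hj (hstr j hj) r₀
  -- total sums via fiber decomposition
  have hfiber : ∀ j : ℕ,
      ∑ r, (coinc A r r₀).choose j
        = (∑ i ∈ Finset.range (k + 2), nCoinc A r₀ i * i.choose j)
          + 2 * m.choose j := by
    intro j
    rw [coinc_fiber_sum A r₀ (fun i => i.choose j), Finset.sum_range_succ,
      card_coinc_top A r₀, htop]
    have hmidsum : ∑ i ∈ Finset.range m,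
        (Finset.univ.filter (fun r => coinc A r r₀ = i)).card * i.choose j
        = ∑ i ∈ Finset.range (k + 2), nCoinc A r₀ i * i.choose j := by
      rw [← Finset.sum_range_add_sum_Ico _ htm]
      have h1 : ∑ i ∈ Finset.range (k + 2),
          (Finset.univ.filter (fun r => coinc A r r₀ = i)).card * i.choose j
          = ∑ i ∈ Finset.range (k + 2), nCoinc A r₀ i * i.choose j := by
        refine Finset.sum_congr rfl fun i hi => ?_
        rw [card_coinc_eq_nCoinc A r₀ i (by rw [Finset.mem_range] at hi; omega)]
      have h2 : ∑ i ∈ Finset.Ico (k + 2) m,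
          (Finset.univ.filter (fun r => coinc A r r₀ = i)).card * i.choose j = 0 := by
        refine Finset.sum_eq_zero fun i hi => ?_
        rw [Finset.mem_Ico] at hi
        rw [card_coinc_eq_nCoinc A r₀ i (by omega), hmid i hi.1 hi.2]
        ring
      rw [h1, h2, add_zero]
    rw [hmidsum]
  -- evaluate the truncated sums
  have hsum1 : ∑ i ∈ Finset.range (k + 2), nCoinc A r₀ i * i.choose (k + 1)
      = nCoinc A r₀ (k + 1) := by
    rw [Finset.sum_range_succ, Finset.sum_range_succ, Nat.choose_succ_self,
      Nat.choose_self, Finset.sum_eq_zero (fun i hi => by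
        rw [Finset.mem_range] at hi
        rw [Nat.choose_eq_zero_of_lt (by omega)]; ring)]
    ring
  have hsum2 : ∑ i ∈ Finset.range (k + 2), nCoinc A r₀ i * i.choose k
      = nCoinc A r₀ k + nCoinc A r₀ (k + 1) * (k + 1) := by
    rw [Finset.sum_range_succ, Finset.sum_range_succ, Nat.choose_self,
      Nat.choose_succ_self_right, Finset.sum_eq_zero (fun i hi => by
        rw [Finset.mem_range] at hi
        rw [Nat.choose_eq_zero_of_lt (by omega)]; ring)]
    ring
  -- Equation for j = k+1
  have E1 : nCoinc A r₀ (k + 1) + 2 * m.choose (k + 1)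
      = m.choose (k + 1) * (2 * (u + 1)) := by
    have := (hfiber (k + 1)).symm.trans (hBB (k + 1) (by omega))
    rw [hsum1, show k + 2 - (k + 1) = 1 by omega, pow_one] at this
    exact this
  have goal1 : nCoinc A r₀ (k + 1) = 2 * u * m.choose (k + 1) := by
    have h' : m.choose (k + 1) * (2 * (u + 1))
        = 2 * u * m.choose (k + 1) + 2 * m.choose (k + 1) := by ring
    rw [h'] at E1
    exact Nat.add_right_cancel E1
  refine ⟨by simpa using goal1, ?_⟩
  -- Equation for j = k
  have E2 : nCoinc A r₀ k + nCoinc A r₀ (k + 1) * (k + 1) + 2 * m.choose k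
      = m.choose k * (2 * ((u + 1) * (u + 1))) := by
    have := (hfiber k).symm.trans (hBB k (by omega))
    rw [hsum2, show k + 2 - k = 2 by omega, pow_two] at this
    exact this
  rw [goal1] at E2
  have hrel : m.choose (k + 1) * (k + 1) = m.choose k * (m - k) :=
    Nat.choose_succ_right_eq m k
  obtain ⟨d, hd⟩ : ∃ d, m = k + d := ⟨m - k, by omega⟩
  have hd2 : 2 ≤ d := by omega
  have hCpos : 0 < m.choose k := Nat.choose_pos (by omega)
  have hmk : m - k = d := by omega
  rw [hmk] at hrel
  have E3 : nCoinc A r₀ k + 2 * u * (m.choose k * d) + 2 * m.choose k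
      = m.choose k * (2 * ((u + 1) * (u + 1))) := by
    rw [← hrel, ← E2]; ring
  have hgoalrw : u + 1 + (k + 2) - 1 - m = u + 2 - d := by omega
  rw [hgoalrw]
  simp only [Nat.add_sub_cancel]
  -- now goal : nCoinc A r₀ k = 2 * u * (u + 2 - d) * m.choose k
  rcases le_or_gt d (u + 2) with hcase | hcase
  · obtain ⟨e, he⟩ : ∃ e, u + 2 = d + e := ⟨u + 2 - d, by omega⟩
    have hsub : u + 2 - d = e := by omega
    rw [hsub]
    have hexp : m.choose k * (2 * ((u + 1) * (u + 1)))
        = 2 * u * (m.choose k * d) + 2 * u * e * m.choose k + 2 * m.choose k := by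
      have h1 : (u + 1) * (u + 1) = u * (u + 2) + 1 := by ring
      rw [h1, show u * (u + 2) = u * (d + e) by rw [he]]
      ring
    rw [hexp] at E3
    linarith
  · -- d > u + 2 : then u must be 0, and nCoinc k = 0
    rw [show u + 2 - d = 0 by omega]
    rcases Nat.eq_zero_or_pos u with rfl | hu
    · norm_num
      norm_num at E3
      omega
    · exfalso
      have h0 : 2 * ((u + 1) * (u + 1)) < 2 * (u * (u + 3)) + 2 := by nlinarith
      have h1 : m.choose k * (2 * ((u + 1) * (u + 1)))
          < m.choose k * (2 * (u * (u + 3))) + 2 * m.choose k := by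
        calc m.choose k * (2 * ((u + 1) * (u + 1)))
            < m.choose k * (2 * (u * (u + 3)) + 2) := mul_lt_mul_of_pos_left h0 hCpos
          _ = m.choose k * (2 * (u * (u + 3))) + 2 * m.choose k := by ring
      have h2 : u * (u + 3) ≤ u * d := mul_le_mul_right (by omega) u
      have h3 : m.choose k * (2 * (u * (u + 3))) ≤ m.choose k * (2 * (u * d)) :=
        mul_le_mul_right (mul_le_mul_right h2 2) _
      have h4 : m.choose k * (2 * (u * d)) = 2 * u * (m.choose k * d) := by ring
      linarith
end

section
/- Let s ≥ 3. Suppose A0 is an OA(2s^2, s+1, s, 2) with a repeated run c, and let n_i count the other rows agreeing with c in exactly i coordinates. Then n_0 = n_2 = n_3 = ⋯ = n_s = 0, n_1 = 2(s^2 − 1), and n_{s+1} = 1. -/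
open Finset

/-- For `s ≥ 3` and an OA(2s², s+1, s, 2) with a repeated run `c`,
`n_0 = n_2 = ⋯ = n_s = 0`, `n_1 = 2(s² - 1)` and `n_{s+1} = 1`. -/
theorem oa_child_coincidences (s : ℕ) (hs : 3 ≤ s)
    (A : Fin (2 * s ^ 2) → Fin (s + 1) → Fin s) (hOA : isOA (2 * s ^ 2) s 2 A)
    (r₀ r₁ : Fin (2 * s ^ 2)) (hne : r₀ ≠ r₁) (hrep : A r₀ = A r₁) :
    nCoinc A r₀ 0 = 0 ∧ (∀ i, 2 ≤ i → i ≤ s → nCoinc A r₀ i = 0) ∧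
    nCoinc A r₀ 1 = 2 * (s ^ 2 - 1) ∧ nCoinc A r₀ (s + 1) = 1 := by
  obtain ⟨-, hstr⟩ := hOA
  have hs0 : 0 < s := by omega
  have hsq : 9 ≤ s ^ 2 := by calc (9:ℕ) = 3^2 := rfl
                                  _ ≤ s^2 := Nat.pow_le_pow_left hs 2
  -- every pair of distinct columns, any value pair: exactly 2 rows
  have pair2 : ∀ j k : Fin (s+1), j ≠ k → ∀ a b : Fin s,
      (univ.filter (fun r => A r j = a ∧ A r k = b)).card = 2 := by
    intro j k hjk a b
    have hinj : Function.Injective (![j, k]) := by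
      intro x y h
      fin_cases x <;> fin_cases y <;> simp_all
    have h2 := hstr ![j, k] hinj ![a, b]
    have hset : (univ.filter (fun r => ∀ kk, A r (![j,k] kk) = ![a,b] kk))
        = univ.filter (fun r => A r j = a ∧ A r k = b) := by
      apply filter_congr; intro r _
      simp [Fin.forall_fin_two]
    rw [hset] at h2
    exact Nat.eq_of_mul_eq_mul_right (pow_pos hs0 2) h2
  -- the rows matching r₀ in two columns are exactly {r₀, r₁}
  have pairEq : ∀ j k : Fin (s+1), j ≠ k →
      (univ.filter (fun r => A r j = A r₀ j ∧ A r k = A r₀ k)) = {r₀, r₁} := by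
    intro j k hjk
    symm
    apply eq_of_subset_of_card_le
    · intro r hr
      simp only [mem_insert, mem_singleton] at hr
      rcases hr with rfl | rfl
      · simp
      · simp [← hrep]
    · rw [pair2 j k hjk, card_insert_of_notMem (by simp [hne]), card_singleton]
  -- rows outside {r₀, r₁} agree with r₀ in at most one coordinate
  have hco1 : ∀ r : Fin (2 * s ^ 2), r ≠ r₀ → r ≠ r₁ → coinc A r r₀ ≤ 1 := by
    intro r h0 h1
    by_contra h
    push_neg at h
    rw [coinc] at h
    obtain ⟨j, hj, k, hk, hjk⟩ := Finset.one_lt_card.mp h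
    simp only [mem_filter] at hj hk
    have : r ∈ (univ.filter (fun r => A r j = A r₀ j ∧ A r k = A r₀ k)) := by
      simp [hj.2, hk.2]
    rw [pairEq j k hjk] at this
    simp only [mem_insert, mem_singleton] at this
    tauto
  -- each column is matched by exactly 2s rows
  have hcol : ∀ j : Fin (s+1), (univ.filter (fun r => A r j = A r₀ j)).card = s * 2 := by
    intro j
    have : Nontrivial (Fin (s+1)) := Fin.nontrivial_iff_two_le.mpr (by omega)
    obtain ⟨k, hk⟩ := exists_ne j
    rw [Finset.card_eq_sum_card_fiberwise (f := fun r => A r k) (t := univ) (fun x _ => mem_univ _)]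
    have hfib : ∀ v : Fin s,
        ((univ.filter (fun r => A r j = A r₀ j)).filter (fun r => A r k = v)).card = 2 := by
      intro v
      rw [Finset.filter_filter]
      exact pair2 j k (Ne.symm hk) (A r₀ j) v
    rw [Finset.sum_congr rfl (fun v _ => hfib v)]
    simp [mul_comm]
  have hself : coinc A r₀ r₀ = s + 1 := by
    rw [coinc]; simp
  have hr1co : coinc A r₁ r₀ = s + 1 := by
    rw [coinc]; simp [← hrep]
  -- total number of coincidences
  have htot : ∑ r : Fin (2 * s ^ 2), coinc A r r₀ = (s + 1) * (s * 2) := by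
    have hthis : ∀ r, coinc A r r₀ = ∑ j : Fin (s+1), if A r j = A r₀ j then 1 else 0 := by
      intro r; rw [coinc, Finset.card_filter]
    have hcol' : ∀ j : Fin (s+1),
        (∑ r : Fin (2*s^2), if A r j = A r₀ j then 1 else 0) = s * 2 := by
      intro j; rw [← Finset.card_filter]; exact hcol j
    rw [Finset.sum_congr rfl (fun r _ => hthis r), Finset.sum_comm,
      Finset.sum_congr rfl (fun j _ => hcol' j)]
    simp [Finset.card_univ, mul_comm]
  set O : Finset (Fin (2 * s ^ 2)) := univ \ {r₀, r₁} with hO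
  have hmemO : ∀ r, r ∈ O ↔ r ≠ r₀ ∧ r ≠ r₁ := by
    intro r; simp [hO, not_or]
  have hOcard : O.card = 2 * s ^ 2 - 2 := by
    rw [hO, Finset.card_sdiff_of_subset (subset_univ _), Finset.card_univ, Fintype.card_fin,
      Finset.card_insert_of_notMem (by simp [hne]), card_singleton]
  have hsplit : ∑ r ∈ O, coinc A r r₀ + ∑ r ∈ ({r₀, r₁} : Finset _), coinc A r r₀
      = ∑ r : Fin (2 * s ^ 2), coinc A r r₀ := Finset.sum_sdiff (subset_univ _)
  have hpairsum : ∑ r ∈ ({r₀, r₁} : Finset _), coinc A r r₀ = (s + 1) + (s + 1) := by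
    rw [Finset.sum_pair hne, hself, hr1co]
  have hOsum : ∑ r ∈ O, coinc A r r₀ = O.card := by
    rw [hpairsum, htot] at hsplit
    rw [hOcard]
    have hexp : (s + 1) * (s * 2) = 2 * s ^ 2 + 2 * s := by ring
    rw [hexp] at hsplit
    obtain ⟨Q, hQ⟩ : ∃ Q, ∑ r ∈ O, coinc A r r₀ = Q := ⟨_, rfl⟩
    rw [hQ] at hsplit ⊢
    obtain ⟨P, hP⟩ : ∃ P, s ^ 2 = P := ⟨_, rfl⟩
    rw [hP] at hsplit hsq ⊢
    omega
  -- each row outside {r₀, r₁} agrees with r₀ in exactly one coordinate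
  have hone : ∀ r ∈ O, coinc A r r₀ = 1 := by
    have hle : ∀ r ∈ O, coinc A r r₀ ≤ 1 := fun r hr =>
      hco1 r ((hmemO r).mp hr).1 ((hmemO r).mp hr).2
    intro r hr
    exact (Finset.sum_eq_sum_iff_of_le hle).mp (by simpa using hOsum) r hr
  refine ⟨?_, ?_, ?_, ?_⟩
  · rw [nCoinc, Finset.card_eq_zero, Finset.filter_eq_empty_iff]
    rintro r - ⟨h0, hc⟩
    by_cases h1 : r = r₁
    · subst h1; omega
    · have := hone r ((hmemO r).mpr ⟨h0, h1⟩); omega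
  · intro i hi2 his
    rw [nCoinc, Finset.card_eq_zero, Finset.filter_eq_empty_iff]
    rintro r - ⟨h0, hc⟩
    by_cases h1 : r = r₁
    · subst h1; omega
    · have := hone r ((hmemO r).mpr ⟨h0, h1⟩); omega
  · rw [nCoinc]
    have hEq : univ.filter (fun r => r ≠ r₀ ∧ coinc A r r₀ = 1) = O := by
      ext r
      simp only [mem_filter, mem_univ, true_and, hmemO]
      constructor
      · rintro ⟨h0, hc⟩
        refine ⟨h0, fun h1 => ?_⟩
        subst h1; omega
      · rintro ⟨h0, h1⟩
        exact ⟨h0, hone r ((hmemO r).mpr ⟨h0, h1⟩)⟩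
    rw [hEq, hOcard]
    obtain ⟨P, hP⟩ : ∃ P, s ^ 2 = P := ⟨_, rfl⟩
    rw [hP] at hsq ⊢
    omega
  · rw [nCoinc]
    have hEq : univ.filter (fun r => r ≠ r₀ ∧ coinc A r r₀ = s + 1) = {r₁} := by
      ext r
      simp only [mem_filter, mem_univ, true_and, mem_singleton]
      constructor
      · rintro ⟨h0, hc⟩
        by_contra h1
        have := hone r ((hmemO r).mpr ⟨h0, h1⟩); omega
      · rintro rfl
        exact ⟨hne.symm, hr1co⟩
    rw [hEq, card_singleton]
end

section
/- Let s ≥ 3. There is no OA(2s^2, s+2, s, 2) that contains a row c together with a distinct row agreeing with c in all of the first s+1 coordinates, such that deleting the last column yields an array whose coincidence numbers relative to c satisfy n_0 = n_2 = ⋯ = n_s = 0, n_1 = 2(s^2−1), n_{s+1} = 1. Equivalently: an OA(2s^2, s+1, s, 2) with a repeated run cannot be extended by one column to an OA(2s^2, s+2, s, 2). -/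
open Finset

section Aux

variable {s N : ℕ}

private lemma ne_fin_exists {m : ℕ} (hm : 2 ≤ m) (j : Fin m) : ∃ k, k ≠ j := by
  rcases Nat.eq_zero_or_pos j.val with h | h
  · refine ⟨⟨1, by omega⟩, ?_⟩
    simp [Fin.ext_iff, h]
  · refine ⟨⟨0, by omega⟩, ?_⟩
    simp only [ne_eq, Fin.ext_iff]
    omega

private lemma pair_count {m : ℕ} {A : Fin N → Fin m → Fin s}
    (h : ∀ cols : Fin 2 → Fin m, Function.Injective cols →
      ∀ vals : Fin 2 → Fin s,
        (univ.filter (fun r => ∀ k, A r (cols k) = vals k)).card * s ^ 2 = N)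
    {j k : Fin m} (hjk : j ≠ k) (v w : Fin s) :
    (univ.filter (fun r => A r j = v ∧ A r k = w)).card * s ^ 2 = N := by
  have hinj : Function.Injective ![j, k] := by
    intro a b hab
    fin_cases a <;> fin_cases b <;> simp_all
  have h2 := h ![j, k] hinj ![v, w]
  rw [show (univ.filter (fun r => A r j = v ∧ A r k = w))
      = (univ.filter (fun r => ∀ t, A r (![j, k] t) = ![v, w] t)) from
    filter_congr fun r _ => by simp [Fin.forall_fin_two]]
  exact h2

private lemma col_count {m : ℕ} {A : Fin N → Fin m → Fin s} (hs0 : 0 < s)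
    (h : ∀ cols : Fin 2 → Fin m, Function.Injective cols →
      ∀ vals : Fin 2 → Fin s,
        (univ.filter (fun r => ∀ k, A r (cols k) = vals k)).card * s ^ 2 = N)
    (hm : 2 ≤ m) (j : Fin m) (v : Fin s) :
    (univ.filter (fun r => A r j = v)).card * s = N := by
  obtain ⟨k, hk⟩ := ne_fin_exists hm j
  have hfib : (univ.filter (fun r => A r j = v)).card
      = ∑ w : Fin s, (univ.filter (fun r => A r j = v ∧ A r k = w)).card := by
    rw [card_eq_sum_card_fiberwise (f := fun r => A r k) (t := univ) (fun r _ => mem_univ _)]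
    exact sum_congr rfl fun w _ => by rw [filter_filter]
  have hbig : (univ.filter (fun r => A r j = v)).card * s ^ 2 = N * s := by
    rw [hfib, sum_mul]
    rw [Finset.sum_congr rfl fun w _ => pair_count h (Ne.symm hk) v w]
    simp [Finset.sum_const, card_univ, mul_comm]
  have h3 : (univ.filter (fun r => A r j = v)).card * s * s = N * s := by
    rw [mul_assoc, ← pow_two]; exact hbig
  exact Nat.eq_of_mul_eq_mul_right hs0 h3

private lemma sum_coinc_erase {m : ℕ} {A : Fin N → Fin (m+1) → Fin s} {c : Fin N}
    (hcol : ∀ (j : Fin (m+1)) (v : Fin s), (univ.filter (fun r => A r j = v)).card = 2*s) :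
    (∑ r ∈ univ.erase c, coinc A r c) + (m+1) = 2*s*(m+1) := by
  have hterm : ∀ j : Fin (m+1),
      (∑ r ∈ univ.erase c, (if A r j = A c j then 1 else 0)) + 1 = 2*s := by
    intro j
    have hmem : c ∈ univ.filter (fun r => A r j = A c j) := by simp
    have hcard : ((univ.erase c).filter (fun r => A r j = A c j)).card + 1
        = (univ.filter (fun r => A r j = A c j)).card := by
      rw [Finset.filter_erase, card_erase_of_mem hmem]
      have : 0 < (univ.filter (fun r => A r j = A c j)).card := card_pos.mpr ⟨c, hmem⟩
      omega
    rw [← card_filter, hcard, hcol j (A c j)]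
  have key : (∑ r ∈ univ.erase c, coinc A r c)
      = ∑ j : Fin (m+1), ∑ r ∈ univ.erase c, (if A r j = A c j then 1 else 0) := by
    rw [← Finset.sum_comm]
    exact sum_congr rfl fun r _ => by rw [coinc, card_filter]
  have htotal : ∑ j : Fin (m+1),
      ((∑ r ∈ univ.erase c, (if A r j = A c j then 1 else 0)) + 1)
      = ∑ _j : Fin (m+1), 2*s := sum_congr rfl fun j _ => hterm j
  rw [sum_add_distrib, sum_const, sum_const, card_univ, Fintype.card_fin,
    smul_eq_mul, mul_one, smul_eq_mul] at htotal
  rw [key]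
  linarith [htotal]

private lemma sum_coinc_sq_erase {m : ℕ} {A : Fin N → Fin (m+1) → Fin s} {c : Fin N}
    (hcol : ∀ (j : Fin (m+1)) (v : Fin s), (univ.filter (fun r => A r j = v)).card = 2*s)
    (hpair : ∀ {j k : Fin (m+1)}, j ≠ k → ∀ v w,
      (univ.filter (fun r => A r j = v ∧ A r k = w)).card = 2) :
    (∑ r ∈ univ.erase c, (coinc A r c)^2) + (m+1)*(m+1) = 2*s*(m+1) + 2*(m+1)*m := by
  have expand : ∀ r, (coinc A r c)^2 = ∑ j : Fin (m+1), ∑ k : Fin (m+1),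
      (if A r j = A c j ∧ A r k = A c k then 1 else 0) := by
    intro r
    rw [coinc, card_filter, pow_two, Finset.sum_mul_sum]
    refine sum_congr rfl fun j _ => sum_congr rfl fun k _ => ?_
    by_cases h1 : A r j = A c j <;> by_cases h2 : A r k = A c k <;> simp [h1, h2]
  have key : ∑ r ∈ univ.erase c, (coinc A r c)^2
      = ∑ j : Fin (m+1), ∑ k : Fin (m+1),
        ((univ.erase c).filter (fun r => A r j = A c j ∧ A r k = A c k)).card := by
    calc ∑ r ∈ univ.erase c, (coinc A r c)^2
        = ∑ r ∈ univ.erase c, ∑ j : Fin (m+1), ∑ k : Fin (m+1),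
            (if A r j = A c j ∧ A r k = A c k then 1 else 0) :=
          sum_congr rfl fun r _ => expand r
      _ = ∑ j : Fin (m+1), ∑ r ∈ univ.erase c, ∑ k : Fin (m+1),
            (if A r j = A c j ∧ A r k = A c k then 1 else 0) := Finset.sum_comm
      _ = ∑ j : Fin (m+1), ∑ k : Fin (m+1), ∑ r ∈ univ.erase c,
            (if A r j = A c j ∧ A r k = A c k then 1 else 0) :=
          sum_congr rfl fun j _ => Finset.sum_comm
      _ = _ := sum_congr rfl fun j _ => sum_congr rfl fun k _ => (card_filter _ _).symm
  have hval : ∀ j k : Fin (m+1),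
      ((univ.erase c).filter (fun r => A r j = A c j ∧ A r k = A c k)).card + 1
        = if j = k then 2*s else 2 := by
    intro j k
    have hmem : c ∈ univ.filter (fun r => A r j = A c j ∧ A r k = A c k) := by simp
    have hcard : ((univ.erase c).filter (fun r => A r j = A c j ∧ A r k = A c k)).card + 1
        = (univ.filter (fun r => A r j = A c j ∧ A r k = A c k)).card := by
      rw [Finset.filter_erase, card_erase_of_mem hmem]
      have : 0 < (univ.filter (fun r => A r j = A c j ∧ A r k = A c k)).card :=
        card_pos.mpr ⟨c, hmem⟩
      omega
    rw [hcard]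
    by_cases h : j = k
    · subst h
      rw [if_pos rfl,
        show (univ.filter (fun r => A r j = A c j ∧ A r j = A c j))
          = univ.filter (fun r => A r j = A c j) from filter_congr fun r _ => by simp]
      exact hcol j (A c j)
    · rw [if_neg h]; exact hpair h _ _
  have hinner : ∀ j : Fin (m+1),
      (∑ k : Fin (m+1),
        ((univ.erase c).filter (fun r => A r j = A c j ∧ A r k = A c k)).card) + (m+1)
        = 2*s + 2*m := by
    intro j
    have h1 : ∑ k : Fin (m+1),
        (((univ.erase c).filter (fun r => A r j = A c j ∧ A r k = A c k)).card + 1)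
        = ∑ k : Fin (m+1), (if j = k then 2*s else 2) :=
      sum_congr rfl fun k _ => hval j k
    rw [sum_add_distrib, sum_const, card_univ, Fintype.card_fin, smul_eq_mul, mul_one] at h1
    rw [h1, ← Finset.add_sum_erase univ _ (mem_univ j), if_pos rfl]
    have h2 : ∑ k ∈ univ.erase j, (if j = k then 2*s else 2)
        = ∑ _k ∈ univ.erase j, 2 :=
      sum_congr rfl fun k hk => by
        rw [if_neg (fun h => (mem_erase.mp hk).1 h.symm)]
    rw [h2, sum_const, card_erase_of_mem (mem_univ j), card_univ, Fintype.card_fin,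
      smul_eq_mul, Nat.add_sub_cancel]
    ring
  have htot : ∑ j : Fin (m+1),
      ((∑ k : Fin (m+1),
        ((univ.erase c).filter (fun r => A r j = A c j ∧ A r k = A c k)).card) + (m+1))
      = ∑ _j : Fin (m+1), (2*s + 2*m) := sum_congr rfl fun j _ => hinner j
  rw [sum_add_distrib, sum_const, sum_const, card_univ, Fintype.card_fin,
    smul_eq_mul, smul_eq_mul] at htot
  rw [key]
  nlinarith [htot]

private lemma coinc_snoc {m : ℕ} (A : Fin N → Fin m → Fin s) (e : Fin N → Fin s)
    (r c : Fin N) :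
    coinc (fun r => Fin.snoc (A r) (e r) : Fin N → Fin (m+1) → Fin s) r c
      = coinc A r c + (if e r = e c then 1 else 0) := by
  unfold coinc
  rw [card_filter, card_filter, Fin.sum_univ_castSucc]
  simp

end Aux

set_option maxHeartbeats 1000000 in
/-- For `s ≥ 3`, an OA(2s², s+1, s, 2) with a repeated run cannot be
extended by one column to an OA(2s², s+2, s, 2), i.e. it is not embeddable. -/
theorem oa_repeated_not_embeddable (s : ℕ) (hs : 3 ≤ s)
    (A₀ : Fin (2 * s ^ 2) → Fin (s + 1) → Fin s) (hOA : isOA (2 * s ^ 2) s 2 A₀)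
    (r₀ r₁ : Fin (2 * s ^ 2)) (hne : r₀ ≠ r₁) (hrep : A₀ r₀ = A₀ r₁) :
    ¬ isEmbeddable (2 * s ^ 2) s 2 A₀ := by
  rintro ⟨e, -, h2⟩
  obtain ⟨-, h2₀⟩ := hOA
  have hs0 : 0 < s := by omega
  set A : Fin (2*s^2) → Fin (s+1+1) → Fin s := fun r => Fin.snoc (A₀ r) (e r) with hA
  -- counts for A₀
  have hcol₀ : ∀ (j : Fin (s+1)) (v : Fin s),
      (univ.filter (fun r => A₀ r j = v)).card = 2*s := by
    intro j v
    have h := col_count hs0 h2₀ (by omega) j v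
    exact Nat.eq_of_mul_eq_mul_right hs0 (by rw [h]; ring)
  have hpair₀ : ∀ {j k : Fin (s+1)}, j ≠ k → ∀ v w,
      (univ.filter (fun r => A₀ r j = v ∧ A₀ r k = w)).card = 2 := by
    intro j k hjk v w
    exact Nat.eq_of_mul_eq_mul_right (pow_pos hs0 2) (pair_count h2₀ hjk v w)
  -- counts for A
  have hcol : ∀ (j : Fin (s+1+1)) (v : Fin s),
      (univ.filter (fun r => A r j = v)).card = 2*s := by
    intro j v
    have h := col_count hs0 h2 (by omega) j v
    exact Nat.eq_of_mul_eq_mul_right hs0 (by rw [h]; ring)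
  have hpair : ∀ {j k : Fin (s+1+1)}, j ≠ k → ∀ v w,
      (univ.filter (fun r => A r j = v ∧ A r k = w)).card = 2 := by
    intro j k hjk v w
    exact Nat.eq_of_mul_eq_mul_right (pow_pos hs0 2) (pair_count h2 hjk v w)
  -- setup
  set E : Finset (Fin (2*s^2)) := univ.erase r₀ with hE
  have hr1E : r₁ ∈ E := mem_erase.mpr ⟨Ne.symm hne, mem_univ _⟩
  have hy1 : coinc A₀ r₁ r₀ = s + 1 := by
    have hfeq : (univ.filter (fun j => A₀ r₁ j = A₀ r₀ j)) = univ :=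
      filter_true_of_mem fun j _ => by rw [hrep]
    rw [coinc, hfeq, card_univ, Fintype.card_fin]
  -- base sums
  have hS1 : (∑ r ∈ E, coinc A₀ r r₀) + (s+1) = 2*s*(s+1) := sum_coinc_erase hcol₀
  have hS2 : (∑ r ∈ E, (coinc A₀ r r₀)^2) + (s+1)*(s+1) = 2*s*(s+1) + 2*(s+1)*s :=
    sum_coinc_sq_erase hcol₀ hpair₀
  have hsplit1 : coinc A₀ r₁ r₀ + ∑ r ∈ E.erase r₁, coinc A₀ r r₀
      = ∑ r ∈ E, coinc A₀ r r₀ :=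
    Finset.add_sum_erase E (fun r => coinc A₀ r r₀) hr1E
  have hsplit2 : (coinc A₀ r₁ r₀)^2 + ∑ r ∈ E.erase r₁, (coinc A₀ r r₀)^2
      = ∑ r ∈ E, (coinc A₀ r r₀)^2 :=
    Finset.add_sum_erase E (fun r => (coinc A₀ r r₀)^2) hr1E
  rw [← hsplit1, hy1] at hS1
  rw [← hsplit2, hy1] at hS2
  -- all remaining coincidence numbers are 1
  have hPQ : (∑ r ∈ E.erase r₁, coinc A₀ r r₀)
      = ∑ r ∈ E.erase r₁, (coinc A₀ r r₀)^2 := by nlinarith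
  have hy_sq : ∀ r ∈ E.erase r₁, coinc A₀ r r₀ = (coinc A₀ r r₀)^2 :=
    (Finset.sum_eq_sum_iff_of_le (fun r _ => Nat.le_self_pow two_ne_zero _)).mp hPQ
  have hy_le1 : ∀ r ∈ E.erase r₁, coinc A₀ r r₀ ≤ 1 := by
    intro r hr
    have h := hy_sq r hr
    by_contra hlt
    push_neg at hlt
    have h2' : coinc A₀ r r₀ * 2 ≤ coinc A₀ r r₀ * coinc A₀ r r₀ :=
      Nat.mul_le_mul_left _ hlt
    have hp : coinc A₀ r r₀ ^ 2 = coinc A₀ r r₀ * coinc A₀ r r₀ := pow_two _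
    linarith
  have hE'card : (E.erase r₁).card + 2 = 2*s^2 := by
    have h1 : E.card = 2*s^2 - 1 := by
      rw [hE, card_erase_of_mem (mem_univ _), card_univ, Fintype.card_fin]
    have h2' : (E.erase r₁).card = E.card - 1 := card_erase_of_mem hr1E
    have h3 : 3 ≤ 2*s^2 := by nlinarith
    omega
  have hsum_ones : (∑ r ∈ E.erase r₁, coinc A₀ r r₀) = ∑ _r ∈ E.erase r₁, 1 := by
    rw [sum_const, smul_eq_mul, mul_one]
    nlinarith
  have hy_one : ∀ r ∈ E.erase r₁, coinc A₀ r r₀ = 1 :=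
    (Finset.sum_eq_sum_iff_of_le hy_le1).mp hsum_ones
  -- extended sums
  have hT2 : (∑ r ∈ E, (coinc A r r₀)^2) + (s+1+1)*(s+1+1)
      = 2*s*(s+1+1) + 2*(s+1+1)*(s+1) := sum_coinc_sq_erase hcol hpair
  -- last column count
  have hlast : (univ.filter (fun r => e r = e r₀)).card = 2*s := by
    have h := hcol (Fin.last (s+1)) (e r₀)
    rwa [show (univ.filter (fun r => A r (Fin.last (s+1)) = e r₀))
        = univ.filter (fun r => e r = e r₀) from
      filter_congr fun r _ => by simp [hA]] at h
  have hsumε : (∑ r ∈ E, (if e r = e r₀ then 1 else 0)) + 1 = 2*s := by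
    have hsplit : (if e r₀ = e r₀ then 1 else 0)
        + ∑ r ∈ univ.erase r₀, (if e r = e r₀ then 1 else 0)
        = ∑ r : Fin (2*s^2), (if e r = e r₀ then 1 else 0) :=
      Finset.add_sum_erase univ (fun r => if e r = e r₀ then 1 else 0) (mem_univ r₀)
    rw [card_filter] at hlast
    rw [if_pos rfl, ← hE] at hsplit
    omega
  have hδ1 : (if e r₁ = e r₀ then 1 else 0 : ℕ) ≤ 1 := by split <;> omega
  have hsplitε : (if e r₁ = e r₀ then 1 else 0 : ℕ)
      + ∑ r ∈ E.erase r₁, (if e r = e r₀ then 1 else 0)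
      = ∑ r ∈ E, (if e r = e r₀ then 1 else 0) :=
    Finset.add_sum_erase E (fun r => if e r = e r₀ then 1 else 0) hr1E
  have huδ : (if e r₁ = e r₀ then 1 else 0 : ℕ)
      + (∑ r ∈ E.erase r₁, (if e r = e r₀ then 1 else 0)) + 1 = 2*s := by
    omega
  -- coincidences in the extended array
  have hx : ∀ r, coinc A r r₀ = coinc A₀ r r₀ + (if e r = e r₀ then 1 else 0) :=
    fun r => coinc_snoc A₀ e r r₀
  have hxr1 : coinc A r₁ r₀ = (s+1) + (if e r₁ = e r₀ then 1 else 0) := by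
    rw [hx, hy1]
  have hE'x : ∑ r ∈ E.erase r₁, (coinc A r r₀)^2
      = ∑ r ∈ E.erase r₁, (1 + 3 * (if e r = e r₀ then 1 else 0)) := by
    refine sum_congr rfl fun r hr => ?_
    rw [hx r, hy_one r hr]
    split <;> norm_num
  have hE'x2 : ∑ r ∈ E.erase r₁, (1 + 3 * (if e r = e r₀ then 1 else 0))
      = (E.erase r₁).card + 3 * ∑ r ∈ E.erase r₁, (if e r = e r₀ then 1 else 0) := by
    rw [sum_add_distrib, sum_const, smul_eq_mul, mul_one, mul_sum]
  have hsplitx : (coinc A r₁ r₀)^2 + ∑ r ∈ E.erase r₁, (coinc A r r₀)^2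
      = ∑ r ∈ E, (coinc A r r₀)^2 :=
    Finset.add_sum_erase E (fun r => (coinc A r r₀)^2) hr1E
  have hEx : ∑ r ∈ E, (coinc A r r₀)^2
      = ((s+1) + (if e r₁ = e r₀ then 1 else 0))^2
        + ((E.erase r₁).card + 3 * ∑ r ∈ E.erase r₁, (if e r = e r₀ then 1 else 0)) := by
    rw [← hsplitx, hxr1, hE'x, hE'x2]
  rw [hEx] at hT2
  -- final contradiction
  rcases (by omega : (if e r₁ = e r₀ then 1 else 0 : ℕ) = 0
      ∨ (if e r₁ = e r₀ then 1 else 0 : ℕ) = 1) with h | h <;>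
    rw [h] at hT2 huδ <;> nlinarith
end

section
/- Let B = {(a_1, b_1, c_1); ...; (a_m, b_m, c_m)} be a generalized orthogonal array GOA(n, m, s, 3), where each a_i, b_i, c_i is a column vector of length n with entries in {0,...,s-1}. Define columns d_i = a_i·s^2 + b_i·s + c_i (entrywise). Then D = (d_1, ..., d_m) is a strong orthogonal array SOA(n, m, s^3, 3). -/
open Finset

private lemma d_div_sq {s a b c : ℕ} (hb : b < s) (hc : c < s) :
    (a * s ^ 2 + b * s + c) / s ^ 2 = a := by
  have hs : 0 < s := lt_of_le_of_lt (Nat.zero_le b) hb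
  have hbc : b * s + c < s ^ 2 := by
    calc b * s + c < b * s + s := Nat.add_lt_add_left hc _
      _ = (b + 1) * s := by ring
      _ ≤ s * s := mul_le_mul_left (by omega : b + 1 ≤ s) s
      _ = s ^ 2 := (pow_two s).symm
  rw [add_assoc, mul_comm a, Nat.mul_add_div (pow_pos hs 2), Nat.div_eq_of_lt hbc, add_zero]

private lemma d_div_s {s a b c : ℕ} (hc : c < s) :
    (a * s ^ 2 + b * s + c) / s = a * s + b := by
  have hs : 0 < s := lt_of_le_of_lt (Nat.zero_le c) hc
  have h : a * s ^ 2 + b * s + c = s * (a * s + b) + c := by ring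
  rw [h, Nat.mul_add_div hs, Nat.div_eq_of_lt hc, add_zero]

private lemma digits2 {s a b : ℕ} (hb : b < s) (v : ℕ) :
    a * s + b = v ↔ a = v / s ∧ b = v % s := by
  have hs : 0 < s := lt_of_le_of_lt (Nat.zero_le b) hb
  constructor
  · rintro rfl
    refine ⟨?_, ?_⟩
    · rw [mul_comm, Nat.mul_add_div hs, Nat.div_eq_of_lt hb, add_zero]
    · rw [mul_comm a s, Nat.mul_add_mod, Nat.mod_eq_of_lt hb]
  · rintro ⟨rfl, rfl⟩
    rw [mul_comm]
    exact Nat.div_add_mod v s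

private lemma digits3 {s a b c : ℕ} (ha : a < s) (hb : b < s) (hc : c < s) (v : ℕ) :
    a * s ^ 2 + b * s + c = v ↔ a = v / s ^ 2 ∧ b = v / s % s ∧ c = v % s := by
  have hs : 0 < s := lt_of_le_of_lt (Nat.zero_le a) ha
  constructor
  · rintro rfl
    refine ⟨(d_div_sq hb hc).symm, ?_, ?_⟩
    · rw [d_div_s hc, mul_comm a s, Nat.mul_add_mod, Nat.mod_eq_of_lt hb]
    · have h : a * s ^ 2 + b * s + c = s * (a * s + b) + c := by ring
      rw [h, Nat.mul_add_mod, Nat.mod_eq_of_lt hc]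
  · rintro ⟨rfl, rfl, rfl⟩
    have d1 : s * (v / s) + v % s = v := Nat.div_add_mod v s
    have d2 : s * (v / s / s) + v / s % s = v / s := Nat.div_add_mod (v / s) s
    have d3 : v / s ^ 2 = v / s / s := by rw [Nat.div_div_eq_div_mul, pow_two]
    calc v / s ^ 2 * s ^ 2 + v / s % s * s + v % s
        = (s * (v / s / s) + v / s % s) * s + v % s := by rw [d3]; ring
      _ = s * (v / s) + v % s := by rw [d2]; ring
      _ = v := d1

private lemma card_filter_congr {n : ℕ} {p q : Fin n → Prop} [DecidablePred p] [DecidablePred q]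
    (h : ∀ r, p r ↔ q r) :
    (Finset.univ.filter p).card = (Finset.univ.filter q).card := by
  congr 1
  ext r
  simp only [Finset.mem_filter, Finset.mem_univ, true_and, h r]

private lemma oa3_perm {n m s : ℕ} (a : Fin m → Fin n → ℕ)
    (haa : ∀ i j k : Fin m, i < j → j < k → isOA3N n s (a i) (a j) (a k))
    (i j k : Fin m) (hij : i ≠ j) (hik : i ≠ k) (hjk : j ≠ k) :
    isOA3N n s (a i) (a j) (a k) := by
  intro v1 v2 v3 h1 h2 h3
  rcases lt_trichotomy i j with hij' | hij' | hij'
  · rcases lt_trichotomy j k with hjk' | hjk' | hjk'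
    · exact haa i j k hij' hjk' v1 v2 v3 h1 h2 h3
    · exact absurd hjk' hjk
    · rcases lt_trichotomy i k with hik' | hik' | hik'
      · rw [card_filter_congr (q := fun r => a i r = v1 ∧ a k r = v3 ∧ a j r = v2)
          (fun r => by tauto)]
        exact haa i k j hik' hjk' v1 v3 v2 h1 h3 h2
      · exact absurd hik' hik
      · rw [card_filter_congr (q := fun r => a k r = v3 ∧ a i r = v1 ∧ a j r = v2)
          (fun r => by tauto)]
        exact haa k i j hik' hij' v3 v1 v2 h3 h1 h2
  · exact absurd hij' hij
  · rcases lt_trichotomy i k with hik' | hik' | hik'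
    · rw [card_filter_congr (q := fun r => a j r = v2 ∧ a i r = v1 ∧ a k r = v3)
        (fun r => by tauto)]
      exact haa j i k hij' hik' v2 v1 v3 h2 h1 h3
    · exact absurd hik' hik
    · rcases lt_trichotomy j k with hjk' | hjk' | hjk'
      · rw [card_filter_congr (q := fun r => a j r = v2 ∧ a k r = v3 ∧ a i r = v1)
          (fun r => by tauto)]
        exact haa j k i hjk' hik' v2 v3 v1 h2 h3 h1
      · exact absurd hjk' hjk
      · rw [card_filter_congr (q := fun r => a k r = v3 ∧ a j r = v2 ∧ a i r = v1)
          (fun r => by tauto)]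
        exact haa k j i hjk' hij' v3 v2 v1 h3 h2 h1

/-- Lemma 1, forward direction: a GOA(n, m, s, 3) yields an
SOA(n, m, s³, 3) via `d_i = a_i s² + b_i s + c_i`. -/
theorem goa_to_soa (n m s : ℕ) (a b c : Fin m → Fin n → ℕ)
    (hGOA : isGOA3 n m s a b c) :
    isSOA3 n m s (fun r i => a i r * s ^ 2 + b i r * s + c i r) := by
  obtain ⟨hlt, haa, hab, habc⟩ := hGOA
  constructor
  · intro r i
    obtain ⟨ha, hb, hc⟩ := hlt i r
    have hs : 0 < s := lt_of_le_of_lt (Nat.zero_le _) ha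
    calc a i r * s ^ 2 + b i r * s + c i r
        < a i r * s ^ 2 + b i r * s + s := Nat.add_lt_add_left hc _
      _ = a i r * s ^ 2 + (b i r + 1) * s := by ring
      _ ≤ a i r * s ^ 2 + s * s := by
          exact Nat.add_le_add_left (mul_le_mul_left (by omega : b i r + 1 ≤ s) s) _
      _ = (a i r + 1) * s ^ 2 := by ring
      _ ≤ s * s ^ 2 := mul_le_mul_left (by omega : a i r + 1 ≤ s) _
      _ = s ^ 3 := by ring
  · intro g hg1 hg3 cols hinj u hu hsum vals hvals
    interval_cases g
    · -- g = 1
      have hu0 : u 0 = 3 := by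
        have := hsum
        rw [Fin.sum_univ_one] at this
        exact this
      have hv : vals 0 < s ^ 3 := by have := hvals 0; rwa [hu0] at this
      have hs : 0 < s := by
        rcases Nat.eq_zero_or_pos s with h | h
        · subst h; simp at hv
        · exact h
      have hv1 : vals 0 / s ^ 2 < s := by
        rw [Nat.div_lt_iff_lt_mul (pow_pos hs 2)]
        calc vals 0 < s ^ 3 := hv
          _ = s * s ^ 2 := by ring
      have hiff : ∀ r : Fin n,
          (∀ k : Fin 1, (fun r i => a i r * s ^ 2 + b i r * s + c i r) r (cols k)
              / s ^ (3 - u k) = vals k) ↔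
            (a (cols 0) r = vals 0 / s ^ 2 ∧ b (cols 0) r = vals 0 / s % s
              ∧ c (cols 0) r = vals 0 % s) := by
        intro r
        rw [Fin.forall_fin_one]
        simp only [hu0, Nat.sub_self, pow_zero, Nat.div_one]
        obtain ⟨ha, hb, hc⟩ := hlt (cols 0) r
        exact digits3 ha hb hc (vals 0)
      rw [card_filter_congr hiff]
      exact habc (cols 0) _ _ _ hv1 (Nat.mod_lt _ hs) (Nat.mod_lt _ hs)
    · -- g = 2
      have hsum2 : u 0 + u 1 = 3 := by rw [← Fin.sum_univ_two]; exact hsum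
      have hu02 : 1 ≤ u 0 := hu 0
      have hu12 : 1 ≤ u 1 := hu 1
      have hi : cols 0 ≠ cols 1 := fun h => absurd (hinj h) (by decide)
      have hcases : (u 0 = 2 ∧ u 1 = 1) ∨ (u 0 = 1 ∧ u 1 = 2) := by omega
      rcases hcases with ⟨h0, h1⟩ | ⟨h0, h1⟩
      · have hv0 : vals 0 < s ^ 2 := by have := hvals 0; rwa [h0] at this
        have hv1 : vals 1 < s := by have := hvals 1; rwa [h1, pow_one] at this
        have hs : 0 < s := lt_of_le_of_lt (Nat.zero_le _) hv1
        have hv0d : vals 0 / s < s := by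
          rw [Nat.div_lt_iff_lt_mul hs]
          calc vals 0 < s ^ 2 := hv0
            _ = s * s := by ring
        have hiff : ∀ r : Fin n,
            (∀ k : Fin 2, (fun r i => a i r * s ^ 2 + b i r * s + c i r) r (cols k)
                / s ^ (3 - u k) = vals k) ↔
              (a (cols 0) r = vals 0 / s ∧ b (cols 0) r = vals 0 % s
                ∧ a (cols 1) r = vals 1) := by
          intro r
          rw [Fin.forall_fin_two]
          simp only [h0, h1]
          norm_num
          obtain ⟨ha0, hb0, hc0⟩ := hlt (cols 0) r
          obtain ⟨ha1, hb1, hc1⟩ := hlt (cols 1) r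
          rw [d_div_s hc0, d_div_sq hb1 hc1, digits2 hb0 (vals 0)]
          tauto
        rw [card_filter_congr hiff]
        exact hab (cols 0) (cols 1) hi _ _ _ hv0d (Nat.mod_lt _ hs) hv1
      · have hv0 : vals 0 < s := by have := hvals 0; rwa [h0, pow_one] at this
        have hv1 : vals 1 < s ^ 2 := by have := hvals 1; rwa [h1] at this
        have hs : 0 < s := lt_of_le_of_lt (Nat.zero_le _) hv0
        have hv1d : vals 1 / s < s := by
          rw [Nat.div_lt_iff_lt_mul hs]
          calc vals 1 < s ^ 2 := hv1
            _ = s * s := by ring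
        have hiff : ∀ r : Fin n,
            (∀ k : Fin 2, (fun r i => a i r * s ^ 2 + b i r * s + c i r) r (cols k)
                / s ^ (3 - u k) = vals k) ↔
              (a (cols 1) r = vals 1 / s ∧ b (cols 1) r = vals 1 % s
                ∧ a (cols 0) r = vals 0) := by
          intro r
          rw [Fin.forall_fin_two]
          simp only [h0, h1]
          norm_num
          obtain ⟨ha0, hb0, hc0⟩ := hlt (cols 0) r
          obtain ⟨ha1, hb1, hc1⟩ := hlt (cols 1) r
          rw [d_div_s hc1, d_div_sq hb0 hc0, digits2 hb1 (vals 1)]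
          tauto
        rw [card_filter_congr hiff]
        exact hab (cols 1) (cols 0) hi.symm _ _ _ hv1d (Nat.mod_lt _ hs) hv0
    · -- g = 3
      have hsum3 : u 0 + u 1 + u 2 = 3 := by rw [← Fin.sum_univ_three]; exact hsum
      have hu0 : 1 ≤ u 0 := hu 0
      have hu1 : 1 ≤ u 1 := hu 1
      have hu2 : 1 ≤ u 2 := hu 2
      have h0 : u 0 = 1 := by omega
      have h1 : u 1 = 1 := by omega
      have h2 : u 2 = 1 := by omega
      have hv0 : vals 0 < s := by have := hvals 0; rwa [h0, pow_one] at this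
      have hv1 : vals 1 < s := by have := hvals 1; rwa [h1, pow_one] at this
      have hv2 : vals 2 < s := by have := hvals 2; rwa [h2, pow_one] at this
      have hij : cols 0 ≠ cols 1 := fun h => absurd (hinj h) (by decide)
      have hik : cols 0 ≠ cols 2 := fun h => absurd (hinj h) (by decide)
      have hjk : cols 1 ≠ cols 2 := fun h => absurd (hinj h) (by decide)
      have hiff : ∀ r : Fin n,
          (∀ k : Fin 3, (fun r i => a i r * s ^ 2 + b i r * s + c i r) r (cols k)
              / s ^ (3 - u k) = vals k) ↔
            (a (cols 0) r = vals 0 ∧ a (cols 1) r = vals 1 ∧ a (cols 2) r = vals 2) := by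
        intro r
        have key : ∀ k : Fin 3, (a (cols k) r * s ^ 2 + b (cols k) r * s + c (cols k) r)
            / s ^ (3 - u k) = vals k ↔ a (cols k) r = vals k := by
          intro k
          have huk : u k = 1 := by fin_cases k <;> assumption
          obtain ⟨hak, hbk, hck⟩ := hlt (cols k) r
          rw [huk]
          norm_num
          rw [d_div_sq hbk hck]
        constructor
        · intro h
          exact ⟨(key 0).mp (h 0), (key 1).mp (h 1), (key 2).mp (h 2)⟩
        · rintro ⟨e0, e1, e2⟩ k
          fin_cases k
          · exact (key 0).mpr e0
          · exact (key 1).mpr e1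
          · exact (key 2).mpr e2
      rw [card_filter_congr hiff]
      exact oa3_perm a haa (cols 0) (cols 1) (cols 2) hij hik hjk _ _ _ hv0 hv1 hv2
end

section
/- If D = (d_1, ..., d_m) is a strong orthogonal array SOA(n, m, s^3, 3), then writing each d_i uniquely as d_i = a_i·s^2 + b_i·s + c_i with entries of a_i, b_i, c_i in {0,...,s-1}, the array B = {(a_1, b_1, c_1); ...; (a_m, b_m, c_m)} is a generalized orthogonal array GOA(n, m, s, 3). -/
open Finset

lemma digit2' {s v1 v2 x : ℕ} (h1 : v1 < s) (h2 : v2 < s) :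
    (x / s ^ 2 = v1 ∧ x / s % s = v2) ↔ x / s = v1 * s + v2 := by
  have hs : 0 < s := lt_of_le_of_lt (Nat.zero_le _) h1
  rw [pow_two, ← Nat.div_div_eq_div_mul, Nat.div_mod_unique hs, mul_comm s v1]
  constructor
  · rintro ⟨h, -⟩; omega
  · intro h; constructor <;> omega

lemma digit3' {s v1 v2 v3 x : ℕ} (h1 : v1 < s) (h2 : v2 < s) (h3 : v3 < s) :
    (x / s ^ 2 = v1 ∧ x / s % s = v2 ∧ x % s = v3) ↔ x = v1 * s ^ 2 + v2 * s + v3 := by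
  have hs : 0 < s := lt_of_le_of_lt (Nat.zero_le _) h1
  constructor
  · rintro ⟨ha, hb, hc⟩
    have h := (digit2' h1 h2).mp ⟨ha, hb⟩
    have hx := ((Nat.div_mod_unique hs).mp ⟨h, hc⟩).1
    rw [← hx]; ring
  · intro h
    have key : x / s = v1 * s + v2 ∧ x % s = v3 :=
      (Nat.div_mod_unique hs).mpr ⟨by rw [h]; ring, h3⟩
    have key2 : (v1 * s + v2) / s = v1 ∧ (v1 * s + v2) % s = v2 :=
      (Nat.div_mod_unique hs).mpr ⟨by ring, h2⟩
    refine ⟨?_, ?_, key.2⟩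
    · rw [pow_two, ← Nat.div_div_eq_div_mul, key.1, key2.1]
    · rw [key.1, key2.2]

/-- Lemma 1, converse direction: an SOA(n, m, s³, 3) yields a
GOA(n, m, s, 3) via the base-`s` digits `a_i = ⌊d_i/s²⌋`, `b_i = ⌊d_i/s⌋ mod s`,
`c_i = d_i mod s`. -/
theorem soa_to_goa (n m s : ℕ) (D : Fin n → Fin m → ℕ) (hSOA : isSOA3 n m s D) :
    isGOA3 n m s (fun i r => D r i / s ^ 2) (fun i r => D r i / s % s)
      (fun i r => D r i % s) := by
  obtain ⟨hlt, hOA⟩ := hSOA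
  refine ⟨?_, ?_, ?_, ?_⟩
  · -- bounds
    intro i r
    have h := hlt r i
    have hs : 0 < s := by
      rcases Nat.eq_zero_or_pos s with h0 | h0
      · subst h0; simp at h
      · exact h0
    refine ⟨?_, Nat.mod_lt _ hs, Nat.mod_lt _ hs⟩
    rw [Nat.div_lt_iff_lt_mul (by positivity)]
    calc D r i < s ^ 3 := h
      _ = s * s ^ 2 := by ring
  · -- (a i, a j, a k), i < j < k
    intro i j k hij hjk v1 v2 v3 h1 h2 h3
    have hne1 : i ≠ j := hij.ne
    have hne2 : j ≠ k := hjk.ne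
    have hne3 : i ≠ k := (hij.trans hjk).ne
    have hinj : Function.Injective ![i, j, k] := by
      intro a b hab
      fin_cases a <;> fin_cases b <;>
        simp only [Matrix.cons_val_zero, Matrix.cons_val_one, Matrix.head_cons,
          Fin.mk_zero, Fin.mk_one, Matrix.cons_val_two, Matrix.tail_cons] at hab <;>
        first | rfl | (exact absurd hab (by assumption)) | (exact absurd hab.symm (by assumption))
    have h := hOA 3 (by norm_num) (by norm_num) ![i, j, k] hinj (fun _ => 1)
      (fun _ => le_refl 1) (by simp) ![v1, v2, v3]
      (by intro t; fin_cases t <;> simpa)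
    have hfe := Finset.filter_congr (s := (Finset.univ : Finset (Fin n)))
      (p := fun r => ∀ t : Fin 3, D r (![i, j, k] t) / s ^ (3 - (fun _ => 1) t) = ![v1, v2, v3] t)
      (q := fun r => D r i / s ^ 2 = v1 ∧ D r j / s ^ 2 = v2 ∧ D r k / s ^ 2 = v3)
      (fun r _ => by
        simp only [Fin.forall_fin_succ, Fin.forall_fin_zero_pi, Matrix.cons_val_zero,
          Matrix.cons_val_succ]
        norm_num)
    rw [hfe] at h
    exact h
  · -- (a i, b i, a j), i ≠ j
    intro i j hne v1 v2 v3 h1 h2 h3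
    have hs : 0 < s := lt_of_le_of_lt (Nat.zero_le _) h1
    have hinj : Function.Injective ![i, j] := by
      intro a b hab
      fin_cases a <;> fin_cases b <;>
        simp only [Matrix.cons_val_zero, Matrix.cons_val_one, Matrix.head_cons,
          Fin.mk_zero, Fin.mk_one] at hab <;>
        first | rfl | (exact absurd hab hne) | (exact absurd hab.symm hne)
    have hv : v1 * s + v2 < s ^ 2 := by nlinarith
    have h := hOA 2 (by norm_num) (by norm_num) ![i, j] hinj ![2, 1]
      (by intro t; fin_cases t <;> norm_num) (by simp [Fin.sum_univ_two])
      ![v1 * s + v2, v3]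
      (by intro t; fin_cases t <;> simpa)
    have hfe := Finset.filter_congr (s := (Finset.univ : Finset (Fin n)))
      (p := fun r => ∀ t : Fin 2, D r (![i, j] t) / s ^ (3 - (![2, 1] : Fin 2 → ℕ) t)
          = ![v1 * s + v2, v3] t)
      (q := fun r => D r i / s ^ 2 = v1 ∧ D r i / s % s = v2 ∧ D r j / s ^ 2 = v3)
      (fun r _ => by
        simp only [Fin.forall_fin_succ, Fin.forall_fin_zero_pi, Matrix.cons_val_zero,
          Matrix.cons_val_succ]
        norm_num
        constructor
        · rintro ⟨hL, hR⟩
          obtain ⟨ha, hb⟩ := (digit2' h1 h2).mpr hL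
          exact ⟨ha, hb, hR⟩
        · rintro ⟨ha, hb, hc⟩
          exact ⟨(digit2' h1 h2).mp ⟨ha, hb⟩, hc⟩)
    rw [hfe] at h
    exact h
  · -- (a i, b i, c i)
    intro i v1 v2 v3 h1 h2 h3
    have hs : 0 < s := lt_of_le_of_lt (Nat.zero_le _) h1
    have hinj : Function.Injective ![i] := fun a b _ => Subsingleton.elim a b
    have hv : v1 * s ^ 2 + v2 * s + v3 < s ^ 3 := by nlinarith
    have h := hOA 1 (by norm_num) (by norm_num) ![i] hinj ![3]
      (by intro t; fin_cases t <;> norm_num) (by simp)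
      ![v1 * s ^ 2 + v2 * s + v3]
      (by intro t; fin_cases t <;> simpa)
    have hfe := Finset.filter_congr (s := (Finset.univ : Finset (Fin n)))
      (p := fun r => ∀ t : Fin 1, D r (![i] t) / s ^ (3 - (![3] : Fin 1 → ℕ) t)
          = ![v1 * s ^ 2 + v2 * s + v3] t)
      (q := fun r => D r i / s ^ 2 = v1 ∧ D r i / s % s = v2 ∧ D r i % s = v3)
      (fun r _ => by
        simp only [Fin.forall_fin_succ, Fin.forall_fin_zero_pi, Matrix.cons_val_zero,
          Matrix.cons_val_succ]
        norm_num
        exact (digit3' h1 h2 h3).symm)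
    rw [hfe] at h
    exact h
end

section
/- If there exists a strong orthogonal array SOA(n, m, s^3, 3), then there exists a semi-embeddable orthogonal array OA(n, m, s, 3). Specifically, if {(a_i, b_i, c_i)}_{i=1}^m is the associated GOA(n, m, s, 3), then A = (a_1, ..., a_m) is an OA(n, m, s, 3) all of whose ms children are embeddable. -/
open Finset

section Helpers

private lemma filter_subtype_card' {α : Type} [Fintype α] (p : α → Prop) (q : {x // p x} → Prop)
    [DecidablePred p] [DecidablePred q] :
    (Finset.univ.filter q).card
      = (Finset.univ.filter (fun r => ∃ h : p r, q ⟨r, h⟩)).card := by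
  refine Finset.card_bij (fun r _ => r.1) ?_ ?_ ?_
  · intro a ha
    simp only [Finset.mem_filter, Finset.mem_univ, true_and] at ha ⊢
    exact ⟨a.2, ha⟩
  · intro a _ b _ h
    exact Subtype.ext h
  · intro b hb
    simp only [Finset.mem_filter, Finset.mem_univ, true_and] at hb
    obtain ⟨h, hq⟩ := hb
    exact ⟨⟨b, h⟩, by simpa using hq, rfl⟩

private lemma div_split {s : ℕ} (hs : 0 < s) (x l v : ℕ) (hv : v < s) :
    x / s = l * s + v ↔ x / s ^ 2 = l ∧ x / s % s = v := by
  have h1 : x / s ^ 2 = x / s / s := by rw [pow_two, Nat.div_div_eq_div_mul]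
  rw [h1]
  constructor
  · intro h
    rw [h]
    constructor
    · rw [add_comm, Nat.add_mul_div_right _ _ hs, Nat.div_eq_of_lt hv, zero_add]
    · rw [add_comm, Nat.add_mul_mod_self_right, Nat.mod_eq_of_lt hv]
  · rintro ⟨h2, h3⟩
    calc x / s = s * (x / s / s) + x / s % s := (Nat.div_add_mod _ s).symm
    _ = s * l + v := by rw [h2, h3]
    _ = l * s + v := by rw [mul_comm]

private lemma inj2fin {β : Type*} {x y : β} (h1 : x ≠ y) : Function.Injective ![x, y] := by
  intro a b hab
  fin_cases a <;> fin_cases b <;> simp_all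

private lemma inj3fin {β : Type*} {x y z : β} (h1 : x ≠ y) (h2 : x ≠ z) (h3 : y ≠ z) :
    Function.Injective ![x, y, z] := by
  intro a b hab
  fin_cases a <;> fin_cases b <;> simp_all

private lemma forall_fin3 {P : Fin 3 → Prop} : (∀ k, P k) ↔ P 0 ∧ P 1 ∧ P 2 :=
  ⟨fun h => ⟨h 0, h 1, h 2⟩, fun ⟨h0, h1, h2⟩ k => by fin_cases k <;> assumption⟩

end Helpers

/-- If an SOA(n, m+1, s³, 3) exists, then a semi-embeddable
OA(n, m+1, s, 3) exists (all of its children are embeddable). -/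
theorem soa_gives_semiEmbeddable_oa (n m s : ℕ)
    (hSOA : ∃ D : Fin n → Fin (m + 1) → ℕ, isSOA3 n (m + 1) s D) :
    ∃ A : Fin n → Fin (m + 1) → Fin s, isOA n s 3 A ∧
      ∀ (j : Fin (m + 1)) (ℓ : Fin s), isEmbeddable (n / s) s 2 (child A j ℓ) := by
  obtain ⟨D, hD0, hD⟩ := hSOA
  rcases Nat.eq_zero_or_pos s with hs0 | hs
  · subst hs0
    rcases Nat.eq_zero_or_pos n with hn | hn
    · subst hn
      exact ⟨fun r => r.elim0, ⟨by simp, fun cols _ vals => (vals 0).elim0⟩,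
        fun j ℓ => ℓ.elim0⟩
    · exact absurd (hD0 ⟨0, hn⟩ 0) (by simp)
  · have hs2 : 0 < s ^ 2 := pow_pos hs 2
    -- Basic counting consequences of the SOA property
    have lem1 : ∀ cols : Fin 3 → Fin (m+1), Function.Injective cols →
        ∀ vals : Fin 3 → ℕ, (∀ k, vals k < s) →
        (univ.filter (fun r => ∀ k, D r (cols k) / s ^ 2 = vals k)).card * s ^ 3 = n := by
      intro cols hc vals hv
      have h := hD 3 (by norm_num) le_rfl cols hc (fun _ => 1) (fun _ => le_rfl) (by simp) vals
        (fun k => by simpa using hv k)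
      simpa using h
    have lem2 : ∀ j i : Fin (m+1), j ≠ i → ∀ w v : ℕ, w < s ^ 2 → v < s →
        (univ.filter (fun r => D r j / s = w ∧ D r i / s ^ 2 = v)).card * s ^ 3 = n := by
      intro j i hji w v hw hv
      have h := hD 2 (by norm_num) (by norm_num) ![j, i] (inj2fin hji) ![2, 1]
        (fun k => by fin_cases k <;> norm_num) (by simp [Fin.sum_univ_two])
        ![w, v] (fun k => by fin_cases k <;> simpa)
      have he : (univ.filter (fun r => D r j / s = w ∧ D r i / s ^ 2 = v))
          = (univ.filter (fun r => ∀ k : Fin 2, D r (![j, i] k) / s ^ (3 - ![2, 1] k) = ![w, v] k)) := by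
        apply Finset.filter_congr
        intro r _
        simp [Fin.forall_fin_two]
      rw [he]
      exact h
    have lem3 : ∀ j : Fin (m+1), ∀ w : ℕ, w < s ^ 3 →
        (univ.filter (fun r => D r j = w)).card * s ^ 3 = n := by
      intro j w hw
      have h := hD 1 le_rfl (by norm_num) ![j] (fun a b _ => Subsingleton.elim a b)
        ![3] (fun k => by norm_num) (by simp) ![w] (fun k => by fin_cases k <;> simpa)
      have he : (univ.filter (fun r => D r j = w))
          = (univ.filter (fun r => ∀ k : Fin 1, D r (![j] k) / s ^ (3 - ![3] k) = ![w] k)) := by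
        apply Finset.filter_congr
        intro r _
        simp [Fin.forall_fin_one]
      rw [he]
      exact h
    have lem4 : ∀ j : Fin (m+1), ∀ l : ℕ, l < s →
        (univ.filter (fun r => D r j / s ^ 2 = l)).card * s = n := by
      intro j l hl
      have key : (univ.filter (fun r => D r j / s ^ 2 = l)).card
          = ∑ t ∈ Finset.range (s ^ 2), (univ.filter (fun r => D r j = l * s ^ 2 + t)).card := by
        rw [Finset.card_eq_sum_card_fiberwise (f := fun r => D r j % s ^ 2)
          (t := Finset.range (s ^ 2)) (fun x _ => Finset.mem_range.2 (Nat.mod_lt _ hs2))]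
        refine Finset.sum_congr rfl fun t ht => ?_
        congr 1
        rw [Finset.filter_filter]
        apply Finset.filter_congr
        intro r _
        constructor
        · rintro ⟨h1, h2⟩
          have hd := Nat.div_add_mod (D r j) (s ^ 2)
          rw [h1, h2] at hd
          rw [← hd]; ring
        · intro h
          have ht' := Finset.mem_range.1 ht
          constructor
          · rw [h, add_comm, Nat.add_mul_div_right _ _ hs2, Nat.div_eq_of_lt ht', zero_add]
          · rw [h, add_comm, Nat.add_mul_mod_self_right, Nat.mod_eq_of_lt ht']
      have h5 : (univ.filter (fun r => D r j / s ^ 2 = l)).card * s ^ 3 = s ^ 2 * n := by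
        rw [key, Finset.sum_mul]
        rw [Finset.sum_congr rfl (fun t ht => lem3 j (l * s ^ 2 + t) ?_)]
        · rw [Finset.sum_const, Finset.card_range, smul_eq_mul]
        · have ht' := Finset.mem_range.1 ht
          calc l * s ^ 2 + t < l * s ^ 2 + s ^ 2 := by omega
          _ = (l + 1) * s ^ 2 := by ring
          _ ≤ s * s ^ 2 := Nat.mul_le_mul_right _ (by omega)
          _ = s ^ 3 := by ring
      have h6 : ((univ.filter (fun r => D r j / s ^ 2 = l)).card * s) * s ^ 2 = n * s ^ 2 := by
        calc ((univ.filter (fun r => D r j / s ^ 2 = l)).card * s) * s ^ 2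
            = (univ.filter (fun r => D r j / s ^ 2 = l)).card * s ^ 3 := by ring
        _ = s ^ 2 * n := h5
        _ = n * s ^ 2 := mul_comm _ _
      exact Nat.eq_of_mul_eq_mul_right hs2 h6
    have step : ∀ c : ℕ, c * s ^ 3 = n → c * s ^ 2 = n / s := by
      intro c hcs
      symm
      apply Nat.div_eq_of_eq_mul_left hs
      rw [← hcs]; ring
    have hAlt : ∀ r j, D r j / s ^ 2 < s := by
      intro r j
      rw [Nat.div_lt_iff_lt_mul hs2]
      calc D r j < s ^ 3 := hD0 r j
      _ = s * s ^ 2 := by ring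
    refine ⟨fun r j => ⟨D r j / s ^ 2, hAlt r j⟩, ⟨by simp, ?_⟩, ?_⟩
    · -- A is an OA(n, m+1, s, 3)
      intro cols hc vals
      have h := lem1 cols hc (fun k => (vals k).1) (fun k => (vals k).2)
      have he : (univ.filter (fun r => ∀ k, (⟨D r (cols k) / s ^ 2, hAlt r (cols k)⟩ : Fin s) = vals k))
          = (univ.filter (fun r => ∀ k, D r (cols k) / s ^ 2 = (vals k).1)) := by
        apply Finset.filter_congr
        intro r _
        simp [Fin.ext_iff]
      rw [he]
      exact h
    · -- all children are embeddable
      intro j ℓ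
      refine ⟨fun r => ⟨D r.1 j / s % s, Nat.mod_lt _ hs⟩, ?_, ?_⟩
      · -- cardinality of the child row set
        have hc1 : Fintype.card {r // (fun r j => (⟨D r j / s ^ 2, hAlt r j⟩ : Fin s)) r j = ℓ}
            = (univ.filter (fun r : Fin n => (⟨D r j / s ^ 2, hAlt r j⟩ : Fin s) = ℓ)).card :=
          Fintype.card_subtype _
        rw [hc1]
        have he : (univ.filter (fun r : Fin n => (⟨D r j / s ^ 2, hAlt r j⟩ : Fin s) = ℓ))
            = (univ.filter (fun r => D r j / s ^ 2 = ℓ.1)) := by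
          apply Finset.filter_congr
          intro r _
          simp [Fin.ext_iff]
        rw [he]
        have h4 := lem4 j ℓ.1 ℓ.2
        exact (Nat.div_eq_of_eq_mul_left hs h4.symm).symm
      · intro cols hcinj vals
        rw [filter_subtype_card']
        have hne01 : cols 0 ≠ cols 1 := fun h => absurd (hcinj h) (by decide)
        rcases Fin.eq_castSucc_or_eq_last (cols 0) with ⟨k0, hk0⟩ | hk0 <;>
          rcases Fin.eq_castSucc_or_eq_last (cols 1) with ⟨k1, hk1⟩ | hk1
        · -- both children columns
          have hk01 : k0 ≠ k1 := by
            intro h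
            exact hne01 (by rw [hk0, hk1, h])
          refine step _ ?_
          have h := lem1 ![j.succAbove k0, j.succAbove k1, j]
            (inj3fin (fun h => hk01 (Fin.succAbove_right_injective h))
              (Fin.succAbove_ne j k0) (Fin.succAbove_ne j k1))
            ![(vals 0).1, (vals 1).1, ℓ.1]
            (fun k => by fin_cases k <;> simp [(vals 0).2, (vals 1).2, ℓ.2])
          convert h using 3
          · apply Finset.filter_congr
            intro r _
            simp only [child, Fin.forall_fin_two, forall_fin3, hk0, hk1, Fin.snoc_castSucc,
              exists_prop, Fin.ext_iff, Matrix.cons_val_zero, Matrix.cons_val_one,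
              Matrix.head_cons, Matrix.cons_val_two, Matrix.tail_cons]
            tauto
        · -- cols 0 child column, cols 1 extension column
          refine step _ ?_
          have hw : ℓ.1 * s + (vals 1).1 < s ^ 2 := by
            have h1 := ℓ.2
            have h2 := (vals 1).2
            calc ℓ.1 * s + (vals 1).1 < ℓ.1 * s + s := by omega
            _ = (ℓ.1 + 1) * s := by ring
            _ ≤ s * s := Nat.mul_le_mul_right _ (by omega)
            _ = s ^ 2 := by ring
          have h := lem2 j (j.succAbove k0) (Fin.succAbove_ne j k0).symm
            (ℓ.1 * s + (vals 1).1) (vals 0).1 hw (vals 0).2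
          convert h using 3
          · apply Finset.filter_congr
            intro r _
            rw [div_split hs _ _ _ (vals 1).2]
            simp only [child, Fin.forall_fin_two, hk0, hk1, Fin.snoc_castSucc, Fin.snoc_last,
              exists_prop, Fin.ext_iff]
            tauto
        · -- cols 0 extension column, cols 1 child column
          refine step _ ?_
          have hw : ℓ.1 * s + (vals 0).1 < s ^ 2 := by
            have h1 := ℓ.2
            have h2 := (vals 0).2
            calc ℓ.1 * s + (vals 0).1 < ℓ.1 * s + s := by omega
            _ = (ℓ.1 + 1) * s := by ring
            _ ≤ s * s := Nat.mul_le_mul_right _ (by omega)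
            _ = s ^ 2 := by ring
          have h := lem2 j (j.succAbove k1) (Fin.succAbove_ne j k1).symm
            (ℓ.1 * s + (vals 0).1) (vals 1).1 hw (vals 1).2
          convert h using 3
          · apply Finset.filter_congr
            intro r _
            rw [div_split hs _ _ _ (vals 0).2]
            simp only [child, Fin.forall_fin_two, hk0, hk1, Fin.snoc_castSucc, Fin.snoc_last,
              exists_prop, Fin.ext_iff]
            tauto
        · exact absurd (hk0.trans hk1.symm) hne01
end

section
/- Conversely: let A = (a_1, ..., a_m) be an OA(n, m, s, 3) such that every child of A obtained by branching column a_1 is embeddable, i.e., for each level ℓ there exists a column e_ℓ of length n/s over {0,...,s-1} making (rows of (a_2,...,a_m) with a_1 = ℓ, augmented by e_ℓ) an OA(n/s, m, s, 2). Then there exists a single column b_1 of length n over {0,...,s-1} such that (a_1, a_j, b_1) is an OA(n, 3, s, 3) for every j = 2, ..., m. -/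
open Finset

/-! Glue the embedding columns `e ℓ` of the children along the fibres of `a₁` into one column
`b₁`. A level triple `(ℓ, x, y)` then occurs in `(a₁, a_j, b₁)` exactly as often as `(x, y)` occurs
in the columns `(a_j, e ℓ)` of the `ℓ`-th embedded child, i.e. `(n / s) / s²` times; since each of
the `s` fibres has `n / s` rows, this is `n / s³`. -/

section Glue

variable {R L X : Type} (f : R → L)

def glue (e : ∀ ℓ, {r // f r = ℓ} → X) (r : R) : X := e (f r) ⟨r, rfl⟩

variable {f}

theorem glue_of_eq (e : ∀ ℓ, {r // f r = ℓ} → X) {r : R} {ℓ : L} (h : f r = ℓ) :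
    glue f e r = e ℓ ⟨r, h⟩ := by
  subst h; rfl

theorem card_filter_glue [Fintype R] [DecidableEq L] (e : ∀ ℓ, {r // f r = ℓ} → X) (ℓ : L)
    (P : R → X → Prop) [∀ r x, Decidable (P r x)] :
    #{r | f r = ℓ ∧ P r (glue f e r)} = #{r : {r // f r = ℓ} | P r (e ℓ r)} := by
  symm
  refine card_bij (fun r _ => r.1) ?_ (fun _ _ _ _ => Subtype.ext) ?_
  · rintro ⟨r, rfl⟩ hr
    exact mem_filter.mpr ⟨mem_univ r, rfl, (mem_filter.mp hr).2⟩
  · intro r hr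
    obtain ⟨hℓ, hP⟩ := (mem_filter.mp hr).2
    exact ⟨⟨r, hℓ⟩, by simpa [← glue_of_eq e hℓ] using hP, rfl⟩

end Glue

theorem card_mul_card_eq_of_fiber_card_eq {R L : Type} [Fintype R] [Fintype L] [DecidableEq L]
    {f : R → L} {c : ℕ} (h : ∀ ℓ, Fintype.card {r // f r = ℓ} = c) :
    c * Fintype.card L = Fintype.card R := by
  rw [← Fintype.card_congr (Equiv.sigmaFiberEquiv f), Fintype.card_sigma]
  simp [h, mul_comm]

theorem isOA_of_card_filter_eq {R : Type} [Fintype R] {n s t : ℕ} {M : R → Fin t → Fin s}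
    (hR : Fintype.card R = n) (h : ∀ v : Fin t → Fin s, #{r | ∀ k, M r k = v k} * s ^ t = n) :
    isOA n s t M := by
  refine ⟨hR, fun cols hinj vals => ?_⟩
  let σ := Equiv.ofBijective cols (Finite.injective_iff_bijective.mp hinj)
  convert h (vals ∘ σ.symm) using 4 with r
  exact σ.forall_congr fun {a} => by rw [Function.comp_apply, σ.symm_apply_apply]; rfl

theorem isOA.card_filter_snoc {R : Type} [Fintype R] {n m s : ℕ} {B : R → Fin m → Fin s}
    {e : R → Fin s} (h : isOA n s 2 (fun r => Fin.snoc (B r) (e r))) (k : Fin m) (a b : Fin s) :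
    #{r | B r k = a ∧ e r = b} * s ^ 2 = n := by
  have hinj : Function.Injective ![k.castSucc, Fin.last m] := by
    intro a b
    fin_cases a <;> fin_cases b <;> simp [(Fin.castSucc_lt_last k).ne, (Fin.castSucc_lt_last k).ne']
  simpa [Fin.forall_fin_two] using h.2 _ hinj ![a, b]

theorem b1_of_children_embeddable_general (n m s : ℕ)
    (A : Fin n → Fin (m + 1) → Fin s)
    (hemb : ∀ ℓ : Fin s, ∃ e : {r : Fin n // A r 0 = ℓ} → Fin s,
      isOA (n / s) s 2 (fun r => Fin.snoc (child A 0 ℓ r) (e r))) :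
    ∃ b₁ : Fin n → Fin s, ∀ j : Fin (m + 1), j ≠ 0 →
      isOA n s 3 (fun r => ![A r 0, A r j, b₁ r]) := by
  choose e he using hemb
  have hfibers : n / s * s = n := by
    simpa using card_mul_card_eq_of_fiber_card_eq fun ℓ => (he ℓ).1
  refine ⟨glue (fun r => A r 0) e, fun j hj => isOA_of_card_filter_eq (Fintype.card_fin n) ?_⟩
  intro v
  obtain ⟨k, rfl⟩ := Fin.exists_succ_eq.mpr hj
  have hchild : #{r : {r // A r 0 = v 0} | A r k.succ = v 1 ∧ e (v 0) r = v 2} * s ^ 2 = n / s :=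
    (he (v 0)).card_filter_snoc k (v 1) (v 2)
  simp only [Fin.forall_fin_succ, IsEmpty.forall_iff, and_true, Matrix.cons_val_zero,
    Matrix.cons_val_succ]
  rw [card_filter_glue e (v 0) fun r x => A r k.succ = _ ∧ x = _, pow_succ, ← mul_assoc]
  exact (congr_arg (· * s) hchild).trans hfibers

/-- Conversely, if every child of an OA(n, m+1, s, 3) `A` from branching
column `0` is embeddable, then there is a single column `b₁` such that `(a₁, a_j, b₁)`
is an OA(n, 3, s, 3) for every `j ≠ 1`. -/
theorem b1_of_children_embeddable (n m s : ℕ)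
    (A : Fin n → Fin (m + 1) → Fin s) (hOA : isOA n s 3 A)
    (hemb : ∀ ℓ : Fin s, ∃ e : {r : Fin n // A r 0 = ℓ} → Fin s,
      isOA (n / s) s 2 (fun r => Fin.snoc (child A 0 ℓ r) (e r))) :
    ∃ b₁ : Fin n → Fin s, ∀ j : Fin (m + 1), j ≠ 0 →
      isOA n s 3 (fun r => ![A r 0, A r j, b₁ r]) :=
  b1_of_children_embeddable_general n m s A hemb
end

section
/- Let f(n, s, t) denote the maximum m such that an OA(n, m, s, t) exists, and h(n, s, t) the maximum m such that an SOA(n, m, s^t, t) exists. Suppose f(n, s, 3) = f(n/s, s, 2) + 1, and suppose (as known) that f(n,s,3) − 1 ≤ h(n,s,3) ≤ f(n,s,3) and that the existence of an SOA(n,m,s^3,3) is equivalent to the existence of a semi-embeddable OA(n,m,s,3). Then h(n, s, 3) = f(n, s, 3) − 1. -/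
open Finset

/-- A semi-embeddable OA(n, m, s, 3) exists. -/
def semiEmbeddableOAExists (n m s : ℕ) : Prop :=
  ∃ (m' : ℕ) (_ : m = m' + 1) (A : Fin n → Fin (m' + 1) → Fin s),
    isOA n s 3 A ∧
      ∀ (j : Fin (m' + 1)) (ℓ : Fin s), isEmbeddable (n / s) s 2 (child A j ℓ)


lemma isOA_comp {R : Type} [Fintype R] {n m s t : ℕ} {A : R → Fin m → Fin s}
    (h : isOA n s t A) {n' : ℕ} (e : Fin n' ≃ R) :
    isOA n s t (fun r => A (e r)) := by
  obtain ⟨hcard, hfilt⟩ := h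
  refine ⟨by simpa using (Fintype.card_congr e).trans hcard, ?_⟩
  intro cols hinj vals
  have := hfilt cols hinj vals
  rw [← this]
  congr 1
  rw [← Fintype.card_subtype, ← Fintype.card_subtype]
  exact Fintype.card_congr (e.subtypeEquiv fun a => Iff.rfl)

/-- Theorem 2: if `f(n,s,3) = f(n/s,s,2) + 1`, then
`h(n,s,3) = f(n,s,3) - 1`, given `f(n,s,3) - 1 ≤ h(n,s,3) ≤ f(n,s,3)` and the
equivalence of SOA(n,m,s³,3)'s with semi-embeddable OA(n,m,s,3)'s. -/
theorem h_eq_f_sub_one (n s F F2 H : ℕ)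
    (hF : IsGreatest {m | ∃ A : Fin n → Fin m → Fin s, isOA n s 3 A} F)
    (hF2 : IsGreatest {m | ∃ A : Fin (n / s) → Fin m → Fin s, isOA (n / s) s 2 A} F2)
    (hH : IsGreatest {m | ∃ D : Fin n → Fin m → ℕ, isSOA3 n m s D} H)
    (hcond : F = F2 + 1)
    (hlow : F - 1 ≤ H) (hhigh : H ≤ F)
    (hequiv : ∀ m, (∃ D : Fin n → Fin m → ℕ, isSOA3 n m s D) ↔
      semiEmbeddableOAExists n m s) :
    H = F - 1 := by
  have hF1 : 1 ≤ F := by omega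
  rcases Nat.eq_zero_or_pos s with hs | hs
  · subst hs
    obtain ⟨A, hA⟩ := hF.1
    have hn : n = 0 := by
      rcases Nat.eq_zero_or_pos n with h | h
      · exact h
      · exact absurd (A ⟨0, h⟩ ⟨0, by omega⟩).isLt (by simp)
    subst hn
    have hmem : F + 1 ∈ {m | ∃ A : Fin 0 → Fin m → Fin 0, isOA 0 0 3 A} := by
      refine ⟨Fin.elim0, ⟨by simp, ?_⟩⟩
      intro cols _ vals
      simp
    have := hF.2 hmem
    omega
  · by_cases hHF : H = F
    · exfalso
      obtain ⟨D, hD⟩ := hH.1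
      obtain ⟨m', hm, A, hOA, hemb⟩ := (hequiv H).mp ⟨D, hD⟩
      obtain ⟨e, he⟩ := hemb 0 ⟨0, hs⟩
      have hcard : Fintype.card {r : Fin n // A r 0 = ⟨0, hs⟩} = n / s := he.1
      have hmem : m' + 1 ∈ {m | ∃ A : Fin (n / s) → Fin m → Fin s, isOA (n / s) s 2 A} :=
        ⟨_, isOA_comp he (Fintype.equivFinOfCardEq hcard).symm⟩
      have := hF2.2 hmem
      omega
    · omega
end

section
/- Construction of strong orthogonal arrays from embeddable orthogonal arrays: let (a_1, ..., a_m, a_{m+1}) be an OA(n, m+1, s, 3) with m ≥ 2. Set b_i = a_{m+1} for all i, c_i = a_{i+1} for i < m and c_m = a_1, and d_i = a_i·s^2 + b_i·s + c_i (entrywise). Then B = {(a_i, b_i, c_i)}_{i=1}^{m} is a GOA(n, m, s, 3) and D = (d_1, ..., d_m) is an SOA(n, m, s^3, 3). -/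
open Finset

lemma two_digit {s a b : ℕ} (hs : 0 < s) (hb : b < s) (v : ℕ) :
    a * s + b = v ↔ a = v / s ∧ b = v % s := by
  constructor
  · rintro rfl
    refine ⟨?_, ?_⟩
    · rw [Nat.add_comm, Nat.add_mul_div_right _ _ hs, Nat.div_eq_of_lt hb, Nat.zero_add]
    · rw [show a * s + b = s * a + b by ring, Nat.mul_add_mod, Nat.mod_eq_of_lt hb]
  · rintro ⟨rfl, rfl⟩
    exact Nat.div_add_mod' v s

lemma three_digit {s a b c : ℕ} (hs : 0 < s) (hb : b < s) (hc : c < s) (v : ℕ) :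
    a * s ^ 2 + b * s + c = v ↔ a = v / s ^ 2 ∧ b = v / s % s ∧ c = v % s := by
  have hdv : (a * s ^ 2 + b * s + c) / s = a * s + b := by
    rw [show a * s ^ 2 + b * s + c = s * (a * s + b) + c by ring, Nat.mul_add_div hs,
      Nat.div_eq_of_lt hc, Nat.add_zero]
  have hsm : (a * s ^ 2 + b * s + c) % s = c := by
    rw [show a * s ^ 2 + b * s + c = s * (a * s + b) + c by ring, Nat.mul_add_mod,
      Nat.mod_eq_of_lt hc]
  constructor
  · rintro rfl
    refine ⟨?_, ?_, hsm.symm⟩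
    · have e : (a * s ^ 2 + b * s + c) / s ^ 2 = (a * s ^ 2 + b * s + c) / s / s := by
        rw [Nat.div_div_eq_div_mul, ← pow_two]
      rw [e, hdv, show a * s + b = s * a + b by ring,
        Nat.mul_add_div hs, Nat.div_eq_of_lt hb, Nat.add_zero]
    · rw [hdv, show a * s + b = s * a + b by ring, Nat.mul_add_mod, Nat.mod_eq_of_lt hb]
  · rintro ⟨rfl, rfl, rfl⟩
    have h1 := Nat.div_add_mod' v s
    have h2 := Nat.div_add_mod' (v / s) s
    calc v / s ^ 2 * s ^ 2 + v / s % s * s + v % s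
        = (v / s / s * s + v / s % s) * s + v % s := by
          rw [show v / s ^ 2 = v / s / s by rw [Nat.div_div_eq_div_mul, ← pow_two]]; ring
      _ = v := by rw [h2, h1]

lemma D_div1 {s a b c : ℕ} (hs : 0 < s) (hc : c < s) :
    (a * s ^ 2 + b * s + c) / s = a * s + b := by
  rw [show a * s ^ 2 + b * s + c = s * (a * s + b) + c by ring, Nat.mul_add_div hs,
    Nat.div_eq_of_lt hc, Nat.add_zero]

lemma D_div2 {s a b c : ℕ} (hs : 0 < s) (hb : b < s) (hc : c < s) :
    (a * s ^ 2 + b * s + c) / s ^ 2 = a :=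
  (((three_digit hs hb hc _).mp rfl).1).symm

lemma cyc_ne {m : ℕ} (hm : 2 ≤ m) (i : Fin m) : (i.1 + 1) % m ≠ i.1 := by
  rcases Nat.lt_or_ge (i.1 + 1) m with h | h
  · rw [Nat.mod_eq_of_lt h]; omega
  · have hi := i.2
    have : i.1 + 1 = m := by omega
    rw [this, Nat.mod_self]; omega

lemma core {n m s : ℕ} (a : Fin (m + 1) → Fin n → Fin s)
    (hOA : isOA n s 3 (fun (r : Fin n) j => a j r))
    {j1 j2 j3 : Fin (m + 1)} (h12 : j1 ≠ j2) (h13 : j1 ≠ j3) (h23 : j2 ≠ j3) :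
    isOA3N n s (fun r => (a j1 r : ℕ)) (fun r => (a j2 r : ℕ)) (fun r => (a j3 r : ℕ)) := by
  intro v1 v2 v3 h1 h2 h3
  have hinj : Function.Injective ![j1, j2, j3] := by
    intro x y h
    fin_cases x <;> fin_cases y <;> simp_all
  have key := hOA.2 ![j1, j2, j3] hinj ![⟨v1, h1⟩, ⟨v2, h2⟩, ⟨v3, h3⟩]
  refine .trans ?_ key
  congr 1
  congr 1
  apply Finset.filter_congr
  intro r _
  simp [Fin.forall_fin_succ, Fin.ext_iff]

/-- from an OA(n, m+1, s, 3) `(a₁, …, a_{m+1})` with `m ≥ 2`, setting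
`b_i = a_{m+1}`, `c_i = a_{i+1 (cyclically among the first m)}` and
`d_i = a_i s² + b_i s + c_i` gives a GOA(n, m, s, 3) and an SOA(n, m, s³, 3). -/
theorem construct_soa_from_embeddable (n m s : ℕ) (hm : 2 ≤ m)
    (a : Fin (m + 1) → Fin n → Fin s) (hOA : isOA n s 3 (fun r j => a j r)) :
    isGOA3 n m s (fun i r => (a i.castSucc r : ℕ))
      (fun _ r => (a (Fin.last m) r : ℕ))
      (fun i r => (a (Fin.castSucc ⟨(i.1 + 1) % m, Nat.mod_lt _ (by omega)⟩) r : ℕ)) ∧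
    isSOA3 n m s (fun r i =>
      (a i.castSucc r : ℕ) * s ^ 2 + (a (Fin.last m) r : ℕ) * s +
        (a (Fin.castSucc ⟨(i.1 + 1) % m, Nat.mod_lt _ (by omega)⟩) r : ℕ)) := by
  have hcl : ∀ i : Fin m, i.castSucc ≠ Fin.last m := fun i => (Fin.castSucc_lt_last i).ne
  have hcc : ∀ i j : Fin m, i ≠ j → i.castSucc ≠ j.castSucc := by
    intro i j h h'
    exact h (Fin.castSucc_injective m h')
  have hnext : ∀ i : Fin m,
      (⟨(i.1 + 1) % m, Nat.mod_lt _ (by omega)⟩ : Fin m) ≠ i := by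
    intro i h
    exact cyc_ne hm i (congrArg Fin.val h)
  constructor
  · refine ⟨fun i r => ⟨Fin.is_lt _, Fin.is_lt _, Fin.is_lt _⟩, ?_, ?_, ?_⟩
    · intro i j k hij hjk
      exact core a hOA (hcc _ _ hij.ne) (hcc _ _ (hij.trans hjk).ne) (hcc _ _ hjk.ne)
    · intro i j hij
      exact core a hOA (hcl i) (hcc _ _ hij) (hcl j).symm
    · intro i
      exact core a hOA (hcl i) (hcc _ _ (hnext i).symm) ((hcl _).symm)
  constructor
  · intro r i
    have ha := (a i.castSucc r).isLt
    have hb := (a (Fin.last m) r).isLt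
    have hc := (a (Fin.castSucc ⟨(i.1 + 1) % m, Nat.mod_lt _ (by omega)⟩) r).isLt
    nlinarith [Nat.mul_le_mul_right (s ^ 2) (Nat.succ_le_of_lt ha),
      Nat.mul_le_mul_right s (Nat.succ_le_of_lt hb), Nat.succ_le_of_lt hc]
  · intro g hg1 hg3 cols hinj u hu husum vals hvals
    have hs : 0 < s := by
      rcases Nat.eq_zero_or_pos s with h | h
      · exfalso
        have h0 := hvals ⟨0, by omega⟩
        rw [h, Nat.zero_pow (by have := hu (⟨0, by omega⟩ : Fin g); omega)] at h0
        omega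
      · exact h
    interval_cases g
    · -- g = 1
      have hu0 : u 0 = 3 := by simpa using husum
      have hv : vals 0 < s ^ 3 := by simpa [hu0] using hvals 0
      have b1 : vals 0 / s ^ 2 < s := by
        rw [Nat.div_lt_iff_lt_mul (pow_pos hs 2)]
        calc vals 0 < s ^ 3 := hv
          _ = s * s ^ 2 := by ring
      have key := core a hOA (hcl (cols 0)) (hcc _ _ (hnext (cols 0)).symm) ((hcl _).symm)
        (vals 0 / s ^ 2) (vals 0 / s % s) (vals 0 % s) b1 (Nat.mod_lt _ hs) (Nat.mod_lt _ hs)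
      refine .trans ?_ key
      congr 1
      congr 1
      apply Finset.filter_congr
      intro r _
      simp only [Fin.forall_fin_one, hu0, Nat.sub_self, pow_zero, Nat.div_one]
      exact three_digit hs (Fin.is_lt _) (Fin.is_lt _) (vals 0)
    · -- g = 2
      have e01 : u 0 + u 1 = 3 := by simpa [Fin.sum_univ_two] using husum
      have hu0 := hu 0
      have hu1 := hu 1
      have hc01 : cols 0 ≠ cols 1 := fun h => absurd (hinj h) (by decide)
      rcases (show u 0 = 1 ∧ u 1 = 2 ∨ u 0 = 2 ∧ u 1 = 1 by omega) with ⟨e0, e1⟩ | ⟨e0, e1⟩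
      · have hv0 : vals 0 < s := by simpa [e0] using hvals 0
        have hv1 : vals 1 < s ^ 2 := by simpa [e1] using hvals 1
        have b2 : vals 1 / s < s := by
          rw [Nat.div_lt_iff_lt_mul hs]
          calc vals 1 < s ^ 2 := hv1
            _ = s * s := by ring
        have key := core a hOA (hcl (cols 0)) (hcc _ _ hc01) ((hcl _).symm)
          (vals 0) (vals 1 % s) (vals 1 / s) hv0 (Nat.mod_lt _ hs) b2
        refine .trans ?_ key
        congr 1
        congr 1
        apply Finset.filter_congr
        intro r _
        simp only [Fin.forall_fin_two, e0, e1, show (3:ℕ) - 1 = 2 from rfl,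
          show (3:ℕ) - 2 = 1 from rfl, pow_one]
        rw [D_div2 hs (Fin.is_lt _) (Fin.is_lt _), D_div1 hs (Fin.is_lt _),
          two_digit hs (Fin.is_lt _) (vals 1)]
        tauto
      · have hv1 : vals 1 < s := by simpa [e1] using hvals 1
        have hv0 : vals 0 < s ^ 2 := by simpa [e0] using hvals 0
        have b2 : vals 0 / s < s := by
          rw [Nat.div_lt_iff_lt_mul hs]
          calc vals 0 < s ^ 2 := hv0
            _ = s * s := by ring
        have key := core a hOA (hcl (cols 0)) (hcc _ _ hc01) ((hcl _).symm)
          (vals 0 / s) (vals 0 % s) (vals 1) b2 (Nat.mod_lt _ hs) hv1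
        refine .trans ?_ key
        congr 1
        congr 1
        apply Finset.filter_congr
        intro r _
        simp only [Fin.forall_fin_two, e0, e1, show (3:ℕ) - 1 = 2 from rfl,
          show (3:ℕ) - 2 = 1 from rfl, pow_one]
        rw [D_div2 hs (Fin.is_lt _) (Fin.is_lt _), D_div1 hs (Fin.is_lt _),
          two_digit hs (Fin.is_lt _) (vals 0)]
        tauto
    · -- g = 3
      have e012 : u 0 + u 1 + u 2 = 3 := by simpa [Fin.sum_univ_three] using husum
      have hu0 := hu 0
      have hu1 := hu 1
      have hu2 := hu 2
      have e0 : u 0 = 1 := by omega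
      have e1 : u 1 = 1 := by omega
      have e2 : u 2 = 1 := by omega
      have hc01 : cols 0 ≠ cols 1 := fun h => absurd (hinj h) (by decide)
      have hc02 : cols 0 ≠ cols 2 := fun h => absurd (hinj h) (by decide)
      have hc12 : cols 1 ≠ cols 2 := fun h => absurd (hinj h) (by decide)
      have hv0 : vals 0 < s := by simpa [e0] using hvals 0
      have hv1 : vals 1 < s := by simpa [e1] using hvals 1
      have hv2 : vals 2 < s := by simpa [e2] using hvals 2
      have key := core a hOA (hcc _ _ hc01) (hcc _ _ hc02) (hcc _ _ hc12)
        (vals 0) (vals 1) (vals 2) hv0 hv1 hv2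
      refine .trans ?_ key
      congr 1
      congr 1
      apply Finset.filter_congr
      intro r _
      simp only [Fin.forall_fin_succ, Fin.succ_zero_eq_one,
        Fin.succ_one_eq_two, e0, e1, e2, show (3:ℕ) - 1 = 2 from rfl]
      rw [D_div2 hs (Fin.is_lt _) (Fin.is_lt _), D_div2 hs (Fin.is_lt _) (Fin.is_lt _),
        D_div2 hs (Fin.is_lt _) (Fin.is_lt _)]
      exact ⟨fun h => ⟨h.1, h.2.1, h.2.2.1⟩, fun h => ⟨h.1, h.2.1, h.2.2, fun i => i.elim0⟩⟩
end
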